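/- arXiv:1011.3180 — 7 statements merged into one kernel-verified Lean document; each statement's English description precedes it below -/
import Mathlib

section
/- If a rectangle can be partitioned into finitely many squares (not necessarily of equal size), then the ratio of the lengths of its two perpendicular sides is a rational number. -/
open Set

/-!
If `a / b` were irrational, `a` and `-b` would be `ℚ`-linearly independent, so some `ℚ`-linear
`f : ℝ → ℚ` has `f a = 1` and `f b = -1`. The `f`-area `(f x₂ - f x₁) * (f y₂ - f y₁)` of a box is
additive over tilings: on the grid of all coordinates that occur, the `f`-area of each box
telescopes into a sum over its grid cells, and every cell of the rectangle lies in exactly one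
tile, as one sees by testing the center of the cell. Hence `f a * f b = -1` would equal
`∑ i, f (s i) ^ 2 ≥ 0`.
-/

namespace Finset

variable {α : Type*} [LinearOrder α] (T : Finset α)

/-- The least element of `T` above `u`, with the junk value `u` if there is none. -/
noncomputable def next (u : α) : α :=
  if h : {t ∈ T | u < t}.Nonempty then {t ∈ T | u < t}.min' h else u

variable {T} {u t : α}

lemma next_eq_min' (h : {t ∈ T | u < t}.Nonempty) : T.next u = {t ∈ T | u < t}.min' h :=
  dif_pos h

lemma next_mem_filter (ht : t ∈ T) (hut : u < t) : T.next u ∈ {t ∈ T | u < t} := by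
  rw [next_eq_min' ⟨t, mem_filter.2 ⟨ht, hut⟩⟩]
  exact min'_mem _ _

lemma next_mem (ht : t ∈ T) (hut : u < t) : T.next u ∈ T :=
  (mem_filter.1 (next_mem_filter ht hut)).1

lemma lt_next (ht : t ∈ T) (hut : u < t) : u < T.next u :=
  (mem_filter.1 (next_mem_filter ht hut)).2

lemma next_le (ht : t ∈ T) (hut : u < t) : T.next u ≤ t := by
  rw [next_eq_min' ⟨t, mem_filter.2 ⟨ht, hut⟩⟩]
  exact min'_le _ t (mem_filter.2 ⟨ht, hut⟩)

theorem sum_filter_Ico_next_sub {M : Type*} [AddCommGroup M] (g : α → M) {c d : α}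
    (hc : c ∈ T) (hd : d ∈ T) (hcd : c ≤ d) :
    ∑ u ∈ T with u ∈ Set.Ico c d, (g (T.next u) - g u) = g d - g c := by
  induction hk : #{u ∈ T | u ∈ Set.Ico c d} using Nat.strong_induction_on generalizing c with
  | _ k ih =>
  obtain rfl | hcd := hcd.eq_or_lt
  · simp
  have hsplit : {u ∈ T | u ∈ Set.Ico c d} = insert c {u ∈ T | u ∈ Set.Ico (T.next c) d} := by
    ext u
    simp only [mem_filter, mem_insert, Set.mem_Ico]
    constructor
    · rintro ⟨hu, hcu, hud⟩
      obtain rfl | hcu := hcu.eq_or_lt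
      · exact .inl rfl
      · exact .inr ⟨hu, next_le hu hcu, hud⟩
    · rintro (rfl | ⟨hu, hcu, hud⟩)
      · exact ⟨hc, le_rfl, hcd⟩
      · exact ⟨hu, (lt_next hd hcd).le.trans hcu, hud⟩
  have hc_notMem : c ∉ {u ∈ T | u ∈ Set.Ico (T.next c) d} := by
    simp [lt_next hd hcd]
  have hcard : #{u ∈ T | u ∈ Set.Ico (T.next c) d} < k := by
    rw [← hk, hsplit, card_insert_of_notMem hc_notMem]
    omega
  rw [hsplit, sum_insert hc_notMem, ih _ hcard (next_mem hd hcd) (next_le hd hcd) rfl]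
  abel

end Finset

section Midpoint

variable {K : Type*} [Field K] [LinearOrder K] [IsStrictOrderedRing K] {T : Finset K} {u c d : K}

lemma mid_next_mem_Ioo (hd : d ∈ T) (hu : u ∈ Ico c d) : (u + T.next u) / 2 ∈ Ioo c d := by
  have := Finset.lt_next hd hu.2
  have := Finset.next_le hd hu.2
  constructor <;> linarith [hu.1]

lemma mem_Ico_of_mid_next_mem_Icc (hc : c ∈ T) (hu : u < T.next u)
    (h : (u + T.next u) / 2 ∈ Icc c d) : u ∈ Ico c d := by
  refine ⟨le_of_not_gt fun huc ↦ ?_, by linarith [h.2]⟩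
  linarith [Finset.next_le hc huc, h.1]

end Midpoint

theorem exists_dual_eq_one_eq_neg_one_of_irrational_div {a b : ℝ} (h : Irrational (a / b)) :
    ∃ f : Module.Dual ℚ ℝ, f a = 1 ∧ f b = -1 := by
  have hb : b ≠ 0 := by rintro rfl; simp at h
  have hli : LinearIndependent ℚ ![-b, a] := by
    refine (LinearIndependent.pair_iff' (neg_ne_zero.2 hb)).2 fun q hq ↦ h.ne_rat (-q) ?_
    rw [← hq, Rat.smul_def]
    field_simp
    push_cast
    ring
  obtain ⟨f, hf⟩ := Module.exists_dual_forall_apply_eq_one (linearIndepOn_univ_iff.2 hli)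
  exact ⟨f, by simpa using hf 1 trivial, neg_eq_iff_eq_neg.1 (by simpa using hf 0 trivial)⟩

section Tiling

variable {α : Type*} [LinearOrder α]

/-- The cells of the grid `Tx × Ty` in the box `[c, d] × [c', d']`, each represented by its lower
left corner `p`; the cell itself is `[p.1, Tx.next p.1] × [p.2, Ty.next p.2]`. -/
def boxCells (Tx Ty : Finset α) (c d c' d' : α) : Finset (α × α) :=
  {u ∈ Tx | u ∈ Ico c d} ×ˢ {v ∈ Ty | v ∈ Ico c' d'}

theorem sum_boxCells_sub_mul_sub {R : Type*} [Ring R] (g h : α → R) {Tx Ty : Finset α}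
    {c d c' d' : α} (hc : c ∈ Tx) (hd : d ∈ Tx) (hcd : c ≤ d) (hc' : c' ∈ Ty) (hd' : d' ∈ Ty)
    (hcd' : c' ≤ d') :
    ∑ p ∈ boxCells Tx Ty c d c' d', (g (Tx.next p.1) - g p.1) * (h (Ty.next p.2) - h p.2) =
      (g d - g c) * (h d' - h c') := by
  simp only [boxCells, Finset.sum_product]
  rw [← Finset.sum_mul_sum,
    Finset.sum_filter_Ico_next_sub g hc hd hcd, Finset.sum_filter_Ico_next_sub h hc' hd' hcd']

variable {K : Type*} [Field K] [LinearOrder K] [IsStrictOrderedRing K] {ι : Type*}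
  {x₁ x₂ y₁ y₂ : ι → K} {a₁ a₂ b₁ b₂ : K} {Tx Ty : Finset K}

theorem boxCells_eq_biUnion [Fintype ι] [DecidableEq K]
    (hTx : {a₁, a₂} ∪ range x₁ ∪ range x₂ ⊆ (Tx : Set K))
    (hTy : {b₁, b₂} ∪ range y₁ ∪ range y₂ ⊆ (Ty : Set K))
    (hcover : ⋃ i, Icc (x₁ i) (x₂ i) ×ˢ Icc (y₁ i) (y₂ i) = Icc a₁ a₂ ×ˢ Icc b₁ b₂) :
    boxCells Tx Ty a₁ a₂ b₁ b₂ =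
      Finset.univ.biUnion fun i ↦ boxCells Tx Ty (x₁ i) (x₂ i) (y₁ i) (y₂ i) := by
  ext ⟨u, v⟩
  simp only [boxCells, Finset.mem_biUnion, Finset.mem_univ, true_and, Finset.mem_product,
    Finset.mem_filter]
  constructor
  · rintro ⟨⟨hu, hua⟩, hv, hvb⟩
    have hcenter : ((u + Tx.next u) / 2, (v + Ty.next v) / 2) ∈
        ⋃ i, Icc (x₁ i) (x₂ i) ×ˢ Icc (y₁ i) (y₂ i) :=
      hcover ▸ ⟨Ioo_subset_Icc_self (mid_next_mem_Ioo (hTx (by simp)) hua),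
        Ioo_subset_Icc_self (mid_next_mem_Ioo (hTy (by simp)) hvb)⟩
    obtain ⟨i, hui, hvi⟩ := mem_iUnion.1 hcenter
    exact ⟨i, ⟨hu, mem_Ico_of_mid_next_mem_Icc (hTx (by simp))
        (Finset.lt_next (hTx (by simp)) hua.2) hui⟩,
      hv, mem_Ico_of_mid_next_mem_Icc (hTy (by simp)) (Finset.lt_next (hTy (by simp)) hvb.2) hvi⟩
  · rintro ⟨i, ⟨hu, hui⟩, hv, hvi⟩
    have hcenter : ((u + Tx.next u) / 2, (v + Ty.next v) / 2) ∈ Icc a₁ a₂ ×ˢ Icc b₁ b₂ :=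
      hcover ▸ mem_iUnion.2 ⟨i, Ioo_subset_Icc_self (mid_next_mem_Ioo (hTx (by simp)) hui),
        Ioo_subset_Icc_self (mid_next_mem_Ioo (hTy (by simp)) hvi)⟩
    exact ⟨⟨hu, mem_Ico_of_mid_next_mem_Icc (hTx (by simp))
        (Finset.lt_next (hTx (by simp)) hui.2) hcenter.1⟩,
      hv, mem_Ico_of_mid_next_mem_Icc (hTy (by simp)) (Finset.lt_next (hTy (by simp)) hvi.2)
        hcenter.2⟩

theorem pairwise_disjoint_boxCells (hx₂ : ∀ i, x₂ i ∈ Tx) (hy₂ : ∀ i, y₂ i ∈ Ty)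
    (hdisj : Pairwise fun i j ↦ Disjoint (Ioo (x₁ i) (x₂ i) ×ˢ Ioo (y₁ i) (y₂ i))
      (Ioo (x₁ j) (x₂ j) ×ˢ Ioo (y₁ j) (y₂ j))) :
    Pairwise fun i j ↦ Disjoint (boxCells Tx Ty (x₁ i) (x₂ i) (y₁ i) (y₂ i))
      (boxCells Tx Ty (x₁ j) (x₂ j) (y₁ j) (y₂ j)) := by
  intro i j hij
  refine Finset.disjoint_left.2 fun p hpi hpj ↦ ?_
  simp only [boxCells, Finset.mem_product, Finset.mem_filter] at hpi hpj
  exact disjoint_left.1 (hdisj hij)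
    (mk_mem_prod (mid_next_mem_Ioo (hx₂ i) hpi.1.2) (mid_next_mem_Ioo (hy₂ i) hpi.2.2))
    (mk_mem_prod (mid_next_mem_Ioo (hx₂ j) hpj.1.2) (mid_next_mem_Ioo (hy₂ j) hpj.2.2))

theorem sum_sub_mul_sub_eq_of_tiling [Fintype ι] {R : Type*} [Ring R] (g h : K → R)
    (hx : ∀ i, x₁ i ≤ x₂ i) (hy : ∀ i, y₁ i ≤ y₂ i) (ha : a₁ ≤ a₂) (hb : b₁ ≤ b₂)
    (hcover : ⋃ i, Icc (x₁ i) (x₂ i) ×ˢ Icc (y₁ i) (y₂ i) = Icc a₁ a₂ ×ˢ Icc b₁ b₂)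
    (hdisj : Pairwise fun i j ↦ Disjoint (Ioo (x₁ i) (x₂ i) ×ˢ Ioo (y₁ i) (y₂ i))
      (Ioo (x₁ j) (x₂ j) ×ˢ Ioo (y₁ j) (y₂ j))) :
    ∑ i, (g (x₂ i) - g (x₁ i)) * (h (y₂ i) - h (y₁ i)) = (g a₂ - g a₁) * (h b₂ - h b₁) := by
  classical
  set Tx := ({a₁, a₂} ∪ range x₁ ∪ range x₂ : Set K).toFinite.toFinset
  set Ty := ({b₁, b₂} ∪ range y₁ ∪ range y₂ : Set K).toFinite.toFinset
  have hTx : {a₁, a₂} ∪ range x₁ ∪ range x₂ ⊆ (Tx : Set K) :=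
    (Set.Finite.coe_toFinset _).ge
  have hTy : {b₁, b₂} ∪ range y₁ ∪ range y₂ ⊆ (Ty : Set K) :=
    (Set.Finite.coe_toFinset _).ge
  rw [← sum_boxCells_sub_mul_sub g h (hTx (by simp)) (hTx (by simp)) ha (hTy (by simp))
      (hTy (by simp)) hb, boxCells_eq_biUnion hTx hTy hcover,
    Finset.sum_biUnion ((pairwise_disjoint_boxCells (fun i ↦ hTx (by simp))
      (fun i ↦ hTy (by simp)) hdisj).set_pairwise _)]
  exact Finset.sum_congr rfl fun i _ ↦ (sum_boxCells_sub_mul_sub g h (hTx (by simp))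
    (hTx (by simp)) (hx i) (hTy (by simp)) (hTy (by simp)) (hy i)).symm

end Tiling

/-- **Dehn's theorem.** If a rectangle `[0,a] × [0,b]` can be partitioned into
finitely many axis-parallel squares (not necessarily equal), then the ratio
`a / b` of its perpendicular sides is rational. -/
theorem dehn_rectangle_squares (a b : ℝ) (ha : 0 < a) (hb : 0 < b)
    (n : ℕ) (x y s : Fin n → ℝ) (hs : ∀ i, 0 < s i)
    (hcover : (⋃ i, Icc (x i) (x i + s i) ×ˢ Icc (y i) (y i + s i))
      = Icc (0 : ℝ) a ×ˢ Icc (0 : ℝ) b)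
    (hdisj : ∀ i j, i ≠ j →
      Disjoint (Ioo (x i) (x i + s i) ×ˢ Ioo (y i) (y i + s i))
               (Ioo (x j) (x j + s j) ×ˢ Ioo (y j) (y j + s j))) :
    ∃ q : ℚ, a / b = q := by
  refine exists_rat_of_not_irrational fun hirr ↦ ?_
  obtain ⟨f, hfa, hfb⟩ := exists_dual_eq_one_eq_neg_one_of_irrational_div hirr
  have harea := sum_sub_mul_sub_eq_of_tiling f f (fun i ↦ by linarith [hs i])
    (fun i ↦ by linarith [hs i]) ha.le hb.le hcover hdisj
  simp only [map_add, add_sub_cancel_left, map_zero, sub_zero, hfa, hfb] at harea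
  have hsq : 0 ≤ ∑ i, f (s i) * f (s i) := Finset.sum_nonneg fun i _ ↦ mul_self_nonneg _
  linarith
end

section
/- If a rectangle is partitioned into finitely many smaller rectangles, then each side of every smaller rectangle is parallel to a side of the large rectangle. -/
/-!
Each tilted tile can be reparametrized so that its lowest point is a corner `p` from which its
edges leave at angles `α` and `α + π / 2` with `0 < α < π / 2`; take a tilted tile `R` whose
lowest corner `p` is as low as possible. Points just to the right of the bottom edge of `R` and
close to `p` lie in the big rectangle but not in `R`, so some other tile `Q` passes through `p`
and contains a point strictly to the upper right of `p`. If `Q` is axis-parallel it is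
order-convex, and if `Q` is tilted then `p` is also its lowest corner by minimality. Either way
`Q` contains the vertical segment just above `p`, which runs through the interior of `R`.
-/


open Set

/-- A possibly rotated closed rectangle of width `w`, height `h`, rotated by
angle `θ` and translated by `v`. -/
noncomputable def rotRect (v : ℝ × ℝ) (θ w h : ℝ) : Set (ℝ × ℝ) :=
  (fun p : ℝ × ℝ =>
    (v.1 + Real.cos θ * p.1 - Real.sin θ * p.2,
     v.2 + Real.sin θ * p.1 + Real.cos θ * p.2)) '' (Icc 0 w ×ˢ Icc 0 h)

/-- The corresponding open rectangle (the interior). -/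
noncomputable def rotRectInt (v : ℝ × ℝ) (θ w h : ℝ) : Set (ℝ × ℝ) :=
  (fun p : ℝ × ℝ =>
    (v.1 + Real.cos θ * p.1 - Real.sin θ * p.2,
     v.2 + Real.sin θ * p.1 + Real.cos θ * p.2)) '' (Ioo 0 w ×ˢ Ioo 0 h)

open Real Filter Topology

noncomputable def rigidMotion (v : ℝ × ℝ) (θ : ℝ) (p : ℝ × ℝ) : ℝ × ℝ :=
  (v.1 + cos θ * p.1 - sin θ * p.2, v.2 + sin θ * p.1 + cos θ * p.2)

noncomputable def frameCoords (v : ℝ × ℝ) (θ : ℝ) (z : ℝ × ℝ) : ℝ × ℝ :=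
  ((z.1 - v.1) * cos θ + (z.2 - v.2) * sin θ, (z.1 - v.1) * -sin θ + (z.2 - v.2) * cos θ)

section Frame

variable {v : ℝ × ℝ} {θ w h : ℝ}

lemma frameCoords_rigidMotion (v : ℝ × ℝ) (θ : ℝ) (p : ℝ × ℝ) :
    frameCoords v θ (rigidMotion v θ p) = p := by
  have := sin_sq_add_cos_sq θ
  ext
  · simp only [frameCoords, rigidMotion]; linear_combination p.1 * this
  · simp only [frameCoords, rigidMotion]; linear_combination p.2 * this

lemma rigidMotion_frameCoords (v : ℝ × ℝ) (θ : ℝ) (z : ℝ × ℝ) :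
    rigidMotion v θ (frameCoords v θ z) = z := by
  have := sin_sq_add_cos_sq θ
  ext
  · simp only [frameCoords, rigidMotion]; linear_combination (z.1 - v.1) * this
  · simp only [frameCoords, rigidMotion]; linear_combination (z.2 - v.2) * this

lemma image_rigidMotion (v : ℝ × ℝ) (θ : ℝ) :
    image (rigidMotion v θ) = preimage (frameCoords v θ) :=
  image_eq_preimage_of_inverse (frameCoords_rigidMotion v θ) (rigidMotion_frameCoords v θ)

lemma rotRect_eq_preimage (v : ℝ × ℝ) (θ w h : ℝ) :
    rotRect v θ w h = frameCoords v θ ⁻¹' (Icc 0 w ×ˢ Icc 0 h) := by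
  rw [← image_rigidMotion]; rfl

lemma rotRectInt_eq_preimage (v : ℝ × ℝ) (θ w h : ℝ) :
    rotRectInt v θ w h = frameCoords v θ ⁻¹' (Ioo 0 w ×ˢ Ioo 0 h) := by
  rw [← image_rigidMotion]; rfl

lemma continuous_frameCoords (v : ℝ × ℝ) (θ : ℝ) : Continuous (frameCoords v θ) := by
  unfold frameCoords; fun_prop

lemma isClosed_rotRect (v : ℝ × ℝ) (θ w h : ℝ) : IsClosed (rotRect v θ w h) := by
  rw [rotRect_eq_preimage]
  exact (isClosed_Icc.prod isClosed_Icc).preimage (continuous_frameCoords v θ)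

lemma isOpen_rotRectInt (v : ℝ × ℝ) (θ w h : ℝ) : IsOpen (rotRectInt v θ w h) := by
  rw [rotRectInt_eq_preimage]
  exact (isOpen_Ioo.prod isOpen_Ioo).preimage (continuous_frameCoords v θ)

lemma rotRectInt_subset_rotRect (v : ℝ × ℝ) (θ w h : ℝ) : rotRectInt v θ w h ⊆ rotRect v θ w h :=
  image_mono (prod_mono Ioo_subset_Icc_self Ioo_subset_Icc_self)

lemma rotRect_subset_closure_rotRectInt (v : ℝ × ℝ) (hw : 0 < w) (hh : 0 < h) :
    rotRect v θ w h ⊆ closure (rotRectInt v θ w h) := by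
  have hcont : Continuous (rigidMotion v θ) := by unfold rigidMotion; fun_prop
  calc rotRect v θ w h = rigidMotion v θ '' closure (Ioo 0 w ×ˢ Ioo 0 h) := by
        rw [closure_prod_eq, closure_Ioo hw.ne, closure_Ioo hh.ne]; rfl
    _ ⊆ closure (rotRectInt v θ w h) := image_closure_subset_closure_image hcont

lemma Disjoint.rotRect_left {U : Set (ℝ × ℝ)} (hd : Disjoint (rotRectInt v θ w h) U)
    (hU : IsOpen U) (hw : 0 < w) (hh : 0 < h) : Disjoint (rotRect v θ w h) U :=
  (hd.closure_left hU).mono_left (rotRect_subset_closure_rotRectInt v hw hh)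

lemma frameCoords_rot90 (v : ℝ × ℝ) (θ w : ℝ) (z : ℝ × ℝ) :
    frameCoords (v.1 + w * cos θ, v.2 + w * sin θ) (θ + π / 2) z =
      ((frameCoords v θ z).2, w - (frameCoords v θ z).1) := by
  have := sin_sq_add_cos_sq θ
  simp only [frameCoords, cos_add_pi_div_two, sin_add_pi_div_two, Prod.mk.injEq]
  constructor
  · ring
  · linear_combination w * this

lemma preimage_frameCoords_rot90 (v : ℝ × ℝ) (θ w : ℝ) (I J : Set ℝ) :
    frameCoords v θ ⁻¹' (I ×ˢ J) =
      frameCoords (v.1 + w * cos θ, v.2 + w * sin θ) (θ + π / 2) ⁻¹' (J ×ˢ ((w - ·) ⁻¹' I)) := by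
  ext z; simp [frameCoords_rot90, and_comm]

lemma rotRect_rot90 (v : ℝ × ℝ) (θ w h : ℝ) :
    rotRect v θ w h = rotRect (v.1 + w * cos θ, v.2 + w * sin θ) (θ + π / 2) h w := by
  rw [rotRect_eq_preimage, rotRect_eq_preimage, preimage_frameCoords_rot90 v θ w,
    preimage_const_sub_Icc, sub_self, sub_zero]

lemma rotRectInt_rot90 (v : ℝ × ℝ) (θ w h : ℝ) :
    rotRectInt v θ w h = rotRectInt (v.1 + w * cos θ, v.2 + w * sin θ) (θ + π / 2) h w := by
  rw [rotRectInt_eq_preimage, rotRectInt_eq_preimage, preimage_frameCoords_rot90 v θ w,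
    preimage_const_sub_Ioo, sub_self, sub_zero]

end Frame

lemma exists_rotRect_eq_with_sin_pos_cos_pos {v : ℝ × ℝ} {θ w h : ℝ} (hw : 0 < w) (hh : 0 < h)
    (hs : sin θ ≠ 0) (hc : cos θ ≠ 0) :
    ∃ (p : ℝ × ℝ) (α w' h' : ℝ), 0 < w' ∧ 0 < h' ∧ 0 < sin α ∧ 0 < cos α ∧
      rotRect v θ w h = rotRect p α w' h' ∧ rotRectInt v θ w h = rotRectInt p α w' h' := by
  let Good (θ : ℝ) : Prop := ∀ (v : ℝ × ℝ) (w h : ℝ), 0 < w → 0 < h →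
    ∃ (p : ℝ × ℝ) (α w' h' : ℝ), 0 < w' ∧ 0 < h' ∧ 0 < sin α ∧ 0 < cos α ∧
      rotRect v θ w h = rotRect p α w' h' ∧ rotRectInt v θ w h = rotRectInt p α w' h'
  have base {θ : ℝ} (hs : 0 < sin θ) (hc : 0 < cos θ) : Good θ :=
    fun v w h hw hh => ⟨v, θ, w, h, hw, hh, hs, hc, rfl, rfl⟩
  have step {θ : ℝ} (hθ : Good (θ + π / 2)) : Good θ := fun v w h hw hh => by
    obtain ⟨p, α, w', h', hw', hh', hs, hc, hR, hI⟩ := hθ _ h w hh hw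
    exact ⟨p, α, w', h', hw', hh', hs, hc, (rotRect_rot90 v θ w h).trans hR,
      (rotRectInt_rot90 v θ w h).trans hI⟩
  rcases hs.lt_or_gt with hs | hs <;> rcases hc.lt_or_gt with hc | hc
  · refine step (step (base ?_ ?_)) v w h hw hh <;>
      simp only [sin_add_pi_div_two, cos_add_pi_div_two] <;> linarith
  · refine step (base ?_ ?_) v w h hw hh <;>
      simp only [sin_add_pi_div_two, cos_add_pi_div_two] <;> linarith
  · refine step (step (step (base ?_ ?_))) v w h hw hh <;>
      simp only [sin_add_pi_div_two, cos_add_pi_div_two] <;> linarith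
  · exact base hs hc v w h hw hh

section Normalized

variable {p : ℝ × ℝ} {α w h : ℝ}

lemma eq_of_mem_rotRect_of_snd_le (hs : 0 < sin α) (hc : 0 < cos α) {z : ℝ × ℝ}
    (hz : z ∈ rotRect p α w h) (hz₂ : z.2 ≤ p.2) : z = p := by
  obtain ⟨⟨s, t⟩, ⟨⟨hs₀, -⟩, ht₀, -⟩, rfl⟩ := hz
  have hst : sin α * s + cos α * t ≤ 0 := by simp only at hz₂; linarith
  have hs' : s = 0 := by nlinarith [mul_nonneg hs.le hs₀, mul_nonneg hc.le ht₀]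
  have ht' : t = 0 := by nlinarith [mul_nonneg hs.le hs₀, mul_nonneg hc.le ht₀]
  simp [hs', ht']

lemma eventually_mem_rotRectInt_vertical (hs : 0 < sin α) (hc : 0 < cos α) (hw : 0 < w)
    (hh : 0 < h) : ∀ᶠ ε in 𝓝[>] 0, (p.1, p.2 + ε) ∈ rotRectInt p α w h := by
  filter_upwards [Ioo_mem_nhdsGT (lt_min hw hh)] with ε ⟨hε₀, hε⟩
  have hεw := hε.trans_le (min_le_left w h)
  have hεh := hε.trans_le (min_le_right w h)
  refine ⟨(ε * sin α, ε * cos α), ⟨⟨by positivity, ?_⟩, by positivity, ?_⟩, ?_⟩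
  · nlinarith [sin_le_one α]
  · nlinarith [cos_le_one α]
  · have := sin_sq_add_cos_sq α
    ext
    · simp only; ring
    · simp only; linear_combination ε * this

lemma notMem_rotRect_below_edge (hs : 0 < sin α) (hc : 0 < cos α) {t : ℝ} (ht : 0 < t) :
    (p.1 + t * cos α, p.2 + t * sin α / 2) ∉ rotRect p α w h := by
  rw [rotRect_eq_preimage]
  rintro ⟨-, hneg, -⟩
  simp only [frameCoords] at hneg
  nlinarith [mul_pos ht (mul_pos hs hc)]

end Normalized

lemma Set.OrdConnected.preimage_mul {f : ℝ × ℝ → ℝ} (hf : Monotone f) (c : ℝ) {s : Set ℝ}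
    (hs : s.OrdConnected) : ((fun z => f z * c) ⁻¹' s).OrdConnected := by
  rcases le_total 0 c with hc | hc
  · exact hs.preimage_mono fun _ _ hxy => mul_le_mul_of_nonneg_right (hf hxy) hc
  · exact hs.preimage_anti fun _ _ hxy => mul_le_mul_of_nonpos_right (hf hxy) hc

lemma ordConnected_rotRect {v : ℝ × ℝ} {θ : ℝ} (hθ : sin θ = 0 ∨ cos θ = 0) (w h : ℝ) :
    (rotRect v θ w h).OrdConnected := by
  have hfst : Monotone fun z : ℝ × ℝ => z.1 - v.1 := fun _ _ hz => sub_le_sub_right hz.1 _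
  have hsnd : Monotone fun z : ℝ × ℝ => z.2 - v.2 := fun _ _ hz => sub_le_sub_right hz.2 _
  rw [rotRect_eq_preimage]
  rcases hθ with hθ | hθ
  · have : frameCoords v θ = fun z => ((z.1 - v.1) * cos θ, (z.2 - v.2) * cos θ) := by
      ext z <;> simp [frameCoords, hθ]
    rw [this, mk_preimage_prod]
    exact (ordConnected_Icc.preimage_mul hfst _).inter (ordConnected_Icc.preimage_mul hsnd _)
  · have : frameCoords v θ = fun z => ((z.2 - v.2) * sin θ, (z.1 - v.1) * -sin θ) := by
      ext z <;> simp [frameCoords, hθ]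
    rw [this, mk_preimage_prod]
    exact (ordConnected_Icc.preimage_mul hsnd _).inter (ordConnected_Icc.preimage_mul hfst _)

lemma Set.OrdConnected.eventually_mem_vertical {S : Set (ℝ × ℝ)} (hS : S.OrdConnected)
    {p q : ℝ × ℝ} (hp : p ∈ S) (hq : q ∈ S) (h₁ : p.1 ≤ q.1) (h₂ : p.2 < q.2) :
    ∀ᶠ ε in 𝓝[>] 0, (p.1, p.2 + ε) ∈ S := by
  filter_upwards [Ioc_mem_nhdsGT (sub_pos.2 h₂)] with ε ⟨hε₀, hε⟩
  exact hS.out hp hq ⟨⟨le_rfl, by simp only; linarith⟩, h₁, by simp only; linarith⟩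

lemma eventually_forall_mem_imp_mem {ι X : Type*} [TopologicalSpace X] [Finite ι]
    {C : ι → Set X} (hC : ∀ j, IsClosed (C j)) (p : X) :
    ∀ᶠ x in 𝓝 p, ∀ j, x ∈ C j → p ∈ C j := by
  refine eventually_all.2 fun j => ?_
  by_cases hp : p ∈ C j
  · exact .of_forall fun _ _ => hp
  · filter_upwards [(hC j).isOpen_compl.mem_nhds hp] with x hx hxC using absurd hxC hx

lemma exists_other_tile_at_corner {ι : Type*} [Finite ι] {Q : ι → Set (ℝ × ℝ)}
    (hQ : ∀ j, IsClosed (Q j)) {a b : ℝ} (hcover : ⋃ j, Q j = Icc (0:ℝ) a ×ˢ Icc (0:ℝ) b)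
    {j₀ : ι} {p : ℝ × ℝ} {α w h : ℝ} (hw : 0 < w) (hh : 0 < h) (hs : 0 < sin α) (hc : 0 < cos α)
    (hR : Q j₀ = rotRect p α w h) :
    ∃ j ≠ j₀, p ∈ Q j ∧ ∃ q ∈ Q j, p.1 < q.1 ∧ p.2 < q.2 := by
  have hbig : Q j₀ ⊆ Icc (0, 0) (a, b) := Icc_prod_Icc (0:ℝ) a 0 b ▸ hcover ▸ subset_iUnion Q j₀
  have hp : p ∈ Q j₀ := hR ▸ ⟨0, ⟨⟨le_rfl, hw.le⟩, le_rfl, hh.le⟩, by simp⟩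
  have hv : (p.1 + w * cos α, p.2 + w * sin α) ∈ Q j₀ :=
    hR ▸ ⟨(w, 0), ⟨⟨hw.le, le_rfl⟩, le_rfl, hh.le⟩, by ext <;> simp only <;> ring⟩
  have hlim : Tendsto (fun t : ℝ => (p.1 + t * cos α, p.2 + t * sin α / 2)) (𝓝[>] 0) (𝓝 p) :=
    tendsto_nhdsWithin_of_tendsto_nhds (Continuous.tendsto' (by fun_prop) _ _ (by simp))
  obtain ⟨t, hnear, ht₀, htw⟩ :=
    ((hlim.eventually (eventually_forall_mem_imp_mem hQ p)).and (Ioc_mem_nhdsGT hw)).exists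
  set q := (p.1 + t * cos α, p.2 + t * sin α / 2)
  have hq : q ∈ ⋃ j, Q j := by
    rw [hcover, Icc_prod_Icc]
    refine ordConnected_Icc.out (hbig hp) (hbig hv) ⟨⟨?_, ?_⟩, ?_, ?_⟩ <;> simp only [q] <;>
      nlinarith
  obtain ⟨j, hj⟩ := mem_iUnion.1 hq
  refine ⟨j, ?_, hnear j hj, q, hj, by simp only [q]; nlinarith, by simp only [q]; nlinarith⟩
  rintro rfl
  exact notMem_rotRect_below_edge hs hc ht₀ (hR ▸ hj)

lemma not_eventually_mem_rotRect_vertical {v p : ℝ × ℝ} {θ w h α w' h' : ℝ} (hw : 0 < w)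
    (hh : 0 < h) (hs : 0 < sin α) (hc : 0 < cos α) (hw' : 0 < w') (hh' : 0 < h')
    (hd : Disjoint (rotRectInt v θ w h) (rotRectInt p α w' h')) :
    ¬ ∀ᶠ ε in 𝓝[>] 0, (p.1, p.2 + ε) ∈ rotRect v θ w h := fun hup =>
  have ⟨_, hQ, hR⟩ := (hup.and (eventually_mem_rotRectInt_vertical hs hc hw' hh')).exists
  disjoint_left.1 (hd.rotRect_left (isOpen_rotRectInt p α w' h') hw hh) hQ hR

theorem small_rectangles_parallel_general (a b : ℝ)
    (n : ℕ) (v : Fin n → ℝ × ℝ) (θ w h : Fin n → ℝ)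
    (hw : ∀ i, 0 < w i) (hh : ∀ i, 0 < h i)
    (hcover : (⋃ i, rotRect (v i) (θ i) (w i) (h i)) = Icc (0:ℝ) a ×ˢ Icc (0:ℝ) b)
    (hdisj : ∀ i j, i ≠ j →
      Disjoint (rotRectInt (v i) (θ i) (w i) (h i))
               (rotRectInt (v j) (θ j) (w j) (h j))) :
    ∀ i, Real.sin (θ i) = 0 ∨ Real.cos (θ i) = 0 := by
  by_contra! ⟨i, hi⟩
  choose! P α W H hW hH hsα hcα hR hRInt using fun j (hj : sin (θ j) ≠ 0 ∧ cos (θ j) ≠ 0) =>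
    exists_rotRect_eq_with_sin_pos_cos_pos (v := v j) (hw j) (hh j) hj.1 hj.2
  obtain ⟨j₀, hj₀, hmin⟩ := (Finset.univ.filter fun j => sin (θ j) ≠ 0 ∧ cos (θ j) ≠ 0)
    |>.exists_min_image (fun j => (P j).2) ⟨i, by simpa using hi⟩
  simp only [Finset.mem_filter, Finset.mem_univ, true_and] at hj₀ hmin
  obtain ⟨j, hj, hpj, q, hqj, hq₁, hq₂⟩ := exists_other_tile_at_corner
    (fun j => isClosed_rotRect _ _ _ _) hcover (hW j₀ hj₀) (hH j₀ hj₀) (hsα j₀ hj₀) (hcα j₀ hj₀)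
    (hR j₀ hj₀)
  refine not_eventually_mem_rotRect_vertical (hw j) (hh j) (hsα j₀ hj₀) (hcα j₀ hj₀)
    (hW j₀ hj₀) (hH j₀ hj₀) (hRInt j₀ hj₀ ▸ hdisj j j₀ hj) ?_
  by_cases hal : sin (θ j) = 0 ∨ cos (θ j) = 0
  · exact (ordConnected_rotRect hal _ _).eventually_mem_vertical hpj hqj hq₁.le hq₂
  · rw [not_or] at hal
    rw [hR j hal] at hpj ⊢
    rw [eq_of_mem_rotRect_of_snd_le (hsα j hal) (hcα j hal) hpj (hmin j hal)]
    exact (eventually_mem_rotRectInt_vertical (hsα j hal) (hcα j hal) (hW j hal) (hH j hal)).mono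
      fun _ hx => rotRectInt_subset_rotRect _ _ _ _ hx

/-- If an axis-parallel rectangle `[0,a] × [0,b]` is partitioned into finitely
many (possibly rotated) rectangles with pairwise disjoint interiors, then all
the smaller rectangles have sides parallel to the sides of the big one, i.e.
each rotation angle satisfies `sin θᵢ = 0` or `cos θᵢ = 0`. -/
theorem small_rectangles_parallel (a b : ℝ) (ha : 0 < a) (hb : 0 < b)
    (n : ℕ) (v : Fin n → ℝ × ℝ) (θ w h : Fin n → ℝ)
    (hw : ∀ i, 0 < w i) (hh : ∀ i, 0 < h i)
    (hcover : (⋃ i, rotRect (v i) (θ i) (w i) (h i)) = Icc (0:ℝ) a ×ˢ Icc (0:ℝ) b)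
    (hdisj : ∀ i j, i ≠ j →
      Disjoint (rotRectInt (v i) (θ i) (w i) (h i))
               (rotRectInt (v j) (θ j) (w j) (h j))) :
    ∀ i, Real.sin (θ i) = 0 ∨ Real.cos (θ i) = 0 :=
  small_rectangles_parallel_general a b n v θ w h hw hh hcover hdisj
end

section
/- The plane can be tiled by squares with pairwise distinct positive integer side lengths. -/
/-!
Start from Moroń's perfect squaring of a `33 × 32` rectangle and spiral around it: attach to the
current rectangle the square having its whole right edge as a side, then the one on the bottom
edge of the new rectangle, then left, then top, and so on. Every stage is again a rectangle, and
the square attached to a `w × h` rectangle after the previous one has side `w + h`, larger than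
that previous square (whose side was `w` or `h`); so the sides strictly increase, starting from
`32`, above all the sides of the seed. Each round of four steps pushes every edge of the rectangle
out by at least one unit, so the squares exhaust the plane.
-/

open Set Function

structure Box where
  x : ℤ
  y : ℤ
  w : ℕ
  h : ℕ

structure Square where
  x : ℤ
  y : ℤ
  side : ℕ

def Square.toBox (q : Square) : Box := ⟨q.x, q.y, q.side, q.side⟩

lemma exists_mem_Icc_add_one {a p : ℝ} {n : ℕ} (hn : 0 < n) (hp : p ∈ Icc a (a + n)) :
    ∃ i < n, p ∈ Icc (a + i) (a + i + 1) := by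
  obtain hlt | rfl := hp.2.lt_or_eq
  · have hpa : 0 ≤ p - a := sub_nonneg.2 hp.1
    refine ⟨⌊p - a⌋₊, (Nat.floor_lt hpa).2 (by linarith), ?_, ?_⟩
    · linarith [Nat.floor_le hpa]
    · linarith [Nat.lt_floor_add_one (p - a)]
  · refine ⟨n - 1, Nat.sub_lt hn one_pos, ?_, ?_⟩ <;>
      push_cast [Nat.cast_sub (Nat.one_le_of_lt hn)] <;> linarith

namespace Box

protected def Icc (b : Box) : Set (ℝ × ℝ) :=
  Icc (b.x : ℝ) (b.x + b.w) ×ˢ Icc (b.y : ℝ) (b.y + b.h)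

protected def Ioo (b : Box) : Set (ℝ × ℝ) :=
  Ioo (b.x : ℝ) (b.x + b.w) ×ˢ Ioo (b.y : ℝ) (b.y + b.h)

lemma Ioo_subset_Icc (b : Box) : b.Ioo ⊆ b.Icc :=
  prod_mono Ioo_subset_Icc_self Ioo_subset_Icc_self

instance : LE Box :=
  ⟨fun b c => c.x ≤ b.x ∧ b.x + b.w ≤ c.x + c.w ∧ c.y ≤ b.y ∧ b.y + b.h ≤ c.y + c.h⟩

lemma le_def {b c : Box} :
    b ≤ c ↔ c.x ≤ b.x ∧ b.x + b.w ≤ c.x + c.w ∧ c.y ≤ b.y ∧ b.y + b.h ≤ c.y + c.h :=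
  Iff.rfl

instance : DecidableLE Box := fun _ _ => decidable_of_iff _ le_def.symm

lemma Icc_mono {b c : Box} (h : b ≤ c) : b.Icc ⊆ c.Icc := by
  obtain ⟨hx, hxw, hy, hyh⟩ := h
  exact prod_mono (Icc_subset_Icc (by exact_mod_cast hx) (by exact_mod_cast hxw))
    (Icc_subset_Icc (by exact_mod_cast hy) (by exact_mod_cast hyh))

def Apart (b c : Box) : Prop :=
  b.x + b.w ≤ c.x ∨ c.x + c.w ≤ b.x ∨ b.y + b.h ≤ c.y ∨ c.y + c.h ≤ b.y

instance : DecidableRel Apart := fun _ _ => by unfold Apart; infer_instance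

lemma disjoint_Ioo_of_apart {b c : Box} (h : b.Apart c) : Disjoint b.Ioo c.Ioo := by
  have key {a₁ a₂ b₁ b₂ : ℝ} (h : a₂ ≤ b₁ ∨ b₂ ≤ a₁) : Disjoint (Ioo a₁ a₂) (Ioo b₁ b₂) :=
    Ioo_disjoint_Ioo.2 <| h.elim (fun h => (min_le_left _ _).trans (h.trans (le_max_right _ _)))
      fun h => (min_le_right _ _).trans (h.trans (le_max_left _ _))
  simp only [Box.Ioo, disjoint_prod]
  rcases h with h | h | h | h
  · exact .inl (key (.inl (by exact_mod_cast h)))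
  · exact .inl (key (.inr (by exact_mod_cast h)))
  · exact .inr (key (.inl (by exact_mod_cast h)))
  · exact .inr (key (.inr (by exact_mod_cast h)))

def cell (b : Box) (i j : ℕ) : Box := ⟨b.x + i, b.y + j, 1, 1⟩

lemma Icc_subset_iUnion_of_forall_cell {ι : Type*} {b : Box} (hw : 0 < b.w) (hh : 0 < b.h)
    (t : ι → Box) (h : ∀ i < b.w, ∀ j < b.h, ∃ k, b.cell i j ≤ t k) :
    b.Icc ⊆ ⋃ k, (t k).Icc := by
  rintro p ⟨hp₁, hp₂⟩
  obtain ⟨i, hi, hpi⟩ := exists_mem_Icc_add_one hw hp₁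
  obtain ⟨j, hj, hpj⟩ := exists_mem_Icc_add_one hh hp₂
  obtain ⟨k, hk⟩ := h i hi j hj
  have hp : p ∈ (b.cell i j).Icc := by
    simp only [Box.Icc, cell]
    push_cast
    exact ⟨hpi, hpj⟩
  exact mem_iUnion.2 ⟨k, Icc_mono hk hp⟩

def thicken (b : Box) (r : ℕ) : Box := ⟨b.x - r, b.y - r, b.w + 2 * r, b.h + 2 * r⟩

lemma iUnion_Icc_thicken (b : Box) : ⋃ r, (b.thicken r).Icc = univ := by
  refine eq_univ_of_forall fun p => mem_iUnion.2 ?_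
  obtain ⟨r, hr⟩ := exists_nat_ge (|p.1 - b.x| + |p.2 - b.y|)
  have := abs_le.1 ((le_add_of_nonneg_right (abs_nonneg _)).trans hr)
  have := abs_le.1 ((le_add_of_nonneg_left (abs_nonneg _)).trans hr)
  refine ⟨r, ⟨?_, ?_⟩, ?_, ?_⟩ <;> simp only [thicken] <;> push_cast <;>
    linarith [b.w.cast_nonneg (α := ℝ), b.h.cast_nonneg (α := ℝ)]

end Box

inductive Side
  | right | bottom | left | top

def Side.next : Side → Side
  | right => bottom
  | bottom => left
  | left => top
  | top => right

namespace Box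

def outerSquare (b : Box) : Side → Square
  | .right => ⟨b.x + b.w, b.y, b.h⟩
  | .bottom => ⟨b.x, b.y - b.w, b.w⟩
  | .left => ⟨b.x - b.h, b.y, b.h⟩
  | .top => ⟨b.x, b.y + b.h, b.w⟩

def extend (b : Box) : Side → Box
  | .right => ⟨b.x, b.y, b.w + b.h, b.h⟩
  | .bottom => ⟨b.x, b.y - b.w, b.w, b.h + b.w⟩
  | .left => ⟨b.x - b.h, b.y, b.w + b.h, b.h⟩
  | .top => ⟨b.x, b.y, b.w, b.h + b.w⟩

lemma Icc_extend (b : Box) (d : Side) :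
    (b.extend d).Icc = b.Icc ∪ (b.outerSquare d).toBox.Icc := by
  have hw : (0 : ℝ) ≤ b.w := b.w.cast_nonneg
  have hh : (0 : ℝ) ≤ b.h := b.h.cast_nonneg
  cases d <;> simp only [Box.Icc, extend, outerSquare, Square.toBox] <;> push_cast
  · rw [← union_prod, Icc_union_Icc_eq_Icc (by linarith) (by linarith), add_assoc]
  · rw [sub_add_cancel, ← prod_union, union_comm,
      Icc_union_Icc_eq_Icc (by linarith) (by linarith)]
    congr 2; ring
  · rw [sub_add_cancel, ← union_prod, union_comm,
      Icc_union_Icc_eq_Icc (by linarith) (by linarith)]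
    congr 2; ring
  · rw [← prod_union, Icc_union_Icc_eq_Icc (by linarith) (by linarith), add_assoc]

lemma disjoint_Ioo_outerSquare (b : Box) (d : Side) :
    Disjoint (b.outerSquare d).toBox.Ioo b.Icc := by
  rw [Set.disjoint_left]
  rintro ⟨p, q⟩ ⟨⟨hp₁, hp₂⟩, hq₁, hq₂⟩ ⟨⟨hp₃, hp₄⟩, hq₃, hq₄⟩
  cases d <;> simp only [outerSquare, Square.toBox] at * <;> push_cast at * <;> linarith

lemma side_outerSquare_lt (b : Box) (d : Side) (hw : 0 < b.w) (hh : 0 < b.h) :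
    (b.outerSquare d).side < b.w + b.h := by
  cases d <;> simp only [outerSquare] <;> omega

lemma side_outerSquare_next_extend (b : Box) (d : Side) :
    ((b.extend d).outerSquare d.next).side = b.w + b.h := by
  cases d <;> simp only [extend, outerSquare, Side.next] <;> ring

lemma extend_pos {b : Box} (hw : 0 < b.w) (hh : 0 < b.h) (d : Side) :
    0 < (b.extend d).w ∧ 0 < (b.extend d).h := by
  cases d <;> simp only [extend] <;> omega

lemma thicken_one_le_extend_extend_extend_extend {b : Box} (hw : 0 < b.w) (hh : 0 < b.h)
    (d : Side) :
    b.thicken 1 ≤ (((b.extend d).extend d.next).extend d.next.next).extend d.next.next.next := by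
  cases d <;> simp only [le_def, thicken, extend, Side.next] <;> push_cast <;> omega

end Box

def spiralSide : ℕ → Side
  | 0 => .right
  | n + 1 => (spiralSide n).next

namespace Box

def spiral (b : Box) : ℕ → Box
  | 0 => b
  | n + 1 => (b.spiral n).extend (spiralSide n)

def spiralSquare (b : Box) (n : ℕ) : Square := (b.spiral n).outerSquare (spiralSide n)

lemma spiral_add_four (b : Box) (n : ℕ) :
    b.spiral (n + 4) = ((((b.spiral n).extend (spiralSide n)).extend (spiralSide n).next).extend
      (spiralSide n).next.next).extend (spiralSide n).next.next.next :=
  rfl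

lemma Icc_spiral_succ (b : Box) (n : ℕ) :
    (b.spiral (n + 1)).Icc = (b.spiral n).Icc ∪ (b.spiralSquare n).toBox.Icc :=
  Icc_extend _ _

lemma monotone_Icc_spiral (b : Box) : Monotone fun n => (b.spiral n).Icc :=
  monotone_nat_of_le_succ fun n => (Icc_spiral_succ b n).symm ▸ subset_union_left

lemma Icc_spiralSquare_subset {b : Box} {m n : ℕ} (h : m < n) :
    (b.spiralSquare m).toBox.Icc ⊆ (b.spiral n).Icc :=
  (Icc_spiral_succ b m ▸ subset_union_right).trans (b.monotone_Icc_spiral h)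

lemma disjoint_Ioo_spiralSquare_of_subset {b : Box} {n : ℕ} {s : Set (ℝ × ℝ)}
    (hs : s ⊆ (b.spiral n).Icc) : Disjoint s (b.spiralSquare n).toBox.Ioo :=
  ((disjoint_Ioo_outerSquare _ _).mono_right hs).symm

lemma Icc_spiral_subset (b : Box) (n : ℕ) :
    (b.spiral n).Icc ⊆ b.Icc ∪ ⋃ k, (b.spiralSquare k).toBox.Icc := by
  induction n with
  | zero => exact subset_union_left
  | succ n ih =>
    rw [Icc_spiral_succ]
    exact union_subset ih (subset_union_of_subset_right
      (subset_iUnion (fun k => (b.spiralSquare k).toBox.Icc) n) _)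

lemma spiral_pos {b : Box} (hw : 0 < b.w) (hh : 0 < b.h) (n : ℕ) :
    0 < (b.spiral n).w ∧ 0 < (b.spiral n).h := by
  induction n with
  | zero => exact ⟨hw, hh⟩
  | succ n ih => exact extend_pos ih.1 ih.2 _

lemma strictMono_side_spiralSquare {b : Box} (hw : 0 < b.w) (hh : 0 < b.h) :
    StrictMono fun n => (b.spiralSquare n).side := by
  refine strictMono_nat_of_lt_succ fun n => ?_
  obtain ⟨hwn, hhn⟩ := spiral_pos hw hh n
  calc (b.spiralSquare n).side < (b.spiral n).w + (b.spiral n).h :=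
        side_outerSquare_lt _ _ hwn hhn
    _ = (b.spiralSquare (n + 1)).side := (side_outerSquare_next_extend _ _).symm

lemma thicken_le_spiral {b : Box} (hw : 0 < b.w) (hh : 0 < b.h) (k : ℕ) :
    b.thicken k ≤ b.spiral (4 * k) := by
  induction k with
  | zero => simp only [le_def, thicken, spiral]; push_cast; omega
  | succ k ih =>
    obtain ⟨hwk, hhk⟩ := spiral_pos hw hh (4 * k)
    have h4 := thicken_one_le_extend_extend_extend_extend hwk hhk (spiralSide (4 * k))
    rw [Nat.mul_succ, spiral_add_four]
    simp only [le_def, thicken] at ih h4 ⊢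
    push_cast at ih h4 ⊢
    omega

lemma iUnion_Icc_spiral {b : Box} (hw : 0 < b.w) (hh : 0 < b.h) :
    ⋃ n, (b.spiral n).Icc = univ :=
  eq_univ_of_univ_subset <| (iUnion_Icc_thicken b).symm.subset.trans <|
    iUnion_mono' fun k => ⟨4 * k, Icc_mono (thicken_le_spiral hw hh k)⟩

end Box

structure IsPerfectTiling {ι : Type*} (t : ι → Square) (S : Set (ℝ × ℝ)) : Prop where
  side_pos : ∀ i, 0 < (t i).side
  injective_side : Injective fun i => (t i).side
  iUnion_Icc : ⋃ i, (t i).toBox.Icc = S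
  pairwise_disjoint_Ioo : Pairwise (Disjoint on fun i => (t i).toBox.Ioo)

namespace IsPerfectTiling

variable {ι κ : Type*} {t : ι → Square} {S : Set (ℝ × ℝ)}

lemma comp_equiv (h : IsPerfectTiling t S) (e : κ ≃ ι) : IsPerfectTiling (t ∘ e) S where
  side_pos k := h.side_pos (e k)
  injective_side := h.injective_side.comp e.injective
  iUnion_Icc := (e.surjective.iUnion_comp fun i => (t i).toBox.Icc).trans h.iUnion_Icc
  pairwise_disjoint_Ioo := h.pairwise_disjoint_Ioo.comp_of_injective e.injective

lemma of_forall_cell {b : Box} (hw : 0 < b.w) (hh : 0 < b.h) (hpos : ∀ i, 0 < (t i).side)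
    (hinj : Injective fun i => (t i).side) (hle : ∀ i, (t i).toBox ≤ b)
    (hcell : ∀ i < b.w, ∀ j < b.h, ∃ k, b.cell i j ≤ (t k).toBox)
    (hapart : ∀ i j, i ≠ j → (t i).toBox.Apart (t j).toBox) :
    IsPerfectTiling t b.Icc where
  side_pos := hpos
  injective_side := hinj
  iUnion_Icc := (iUnion_subset fun i => Box.Icc_mono (hle i)).antisymm
    (Box.Icc_subset_iUnion_of_forall_cell hw hh _ hcell)
  pairwise_disjoint_Ioo _ _ hij := Box.disjoint_Ioo_of_apart (hapart _ _ hij)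

theorem sumElim_spiralSquare {b : Box} (h : IsPerfectTiling t b.Icc) (hw : 0 < b.w)
    (hh : 0 < b.h) (hside : ∀ i, (t i).side < b.h) :
    IsPerfectTiling (Sum.elim t b.spiralSquare) univ := by
  have hmono := Box.strictMono_side_spiralSquare hw hh
  have hdisj_base (i : ι) (n : ℕ) : Disjoint (t i).toBox.Ioo (b.spiralSquare n).toBox.Ioo := by
    refine Box.disjoint_Ioo_spiralSquare_of_subset <| (t i).toBox.Ioo_subset_Icc.trans ?_
    exact (h.iUnion_Icc ▸ subset_iUnion (fun i => (t i).toBox.Icc) i).trans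
      (b.monotone_Icc_spiral n.zero_le)
  have hdisj_spiral {m n : ℕ} (hmn : m < n) :
      Disjoint (b.spiralSquare m).toBox.Ioo (b.spiralSquare n).toBox.Ioo :=
    Box.disjoint_Ioo_spiralSquare_of_subset
      ((Box.Ioo_subset_Icc _).trans (Box.Icc_spiralSquare_subset hmn))
  refine ⟨?_, ?_, ?_, ?_⟩
  · rintro (i | n)
    · exact h.side_pos i
    · exact hh.trans_le (hmono.monotone n.zero_le)
  · refine (Sum.comp_elim Square.side t b.spiralSquare ▸ h.injective_side.sumElim
      hmono.injective) fun i n => ((hside i).trans_le (hmono.monotone n.zero_le)).ne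
  · refine eq_univ_of_univ_subset ?_
    rw [iUnion_sum, ← Box.iUnion_Icc_spiral hw hh, iUnion_subset_iff]
    simpa only [Sum.elim_inl, Sum.elim_inr, h.iUnion_Icc] using b.Icc_spiral_subset
  · rintro (i | m) (j | n) hne
    · exact h.pairwise_disjoint_Ioo fun hij => hne (congrArg _ hij)
    · exact hdisj_base i n
    · exact (hdisj_base j m).symm
    · rcases lt_or_gt_of_ne fun hmn : m = n => hne (congrArg _ hmn) with hmn | hmn
      · exact hdisj_spiral hmn
      · exact (hdisj_spiral hmn).symm

end IsPerfectTiling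

/-- Moroń's perfect squaring of a `33 × 32` rectangle. -/
def moronSquares : Fin 9 → Square :=
  ![⟨0, 14, 18⟩, ⟨18, 17, 15⟩, ⟨18, 10, 7⟩, ⟨25, 9, 8⟩, ⟨0, 0, 14⟩, ⟨14, 10, 4⟩, ⟨14, 0, 10⟩,
    ⟨24, 9, 1⟩, ⟨24, 0, 9⟩]

def moronBox : Box := ⟨0, 0, 33, 32⟩

lemma isPerfectTiling_moronSquares : IsPerfectTiling moronSquares moronBox.Icc :=
  .of_forall_cell (by decide) (by decide) (by decide) (by decide) (by decide) (by decide +kernel)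
    (by decide)

/-- The plane can be tiled by squares with pairwise distinct positive integer
side lengths: there is a family of axis-parallel squares with integer sides,
pairwise distinct side lengths, pairwise disjoint interiors, covering ℝ². -/
theorem plane_tiling_distinct_integer_squares :
    ∃ (x y : ℕ → ℝ) (s : ℕ → ℕ),
      (∀ k, 0 < s k) ∧ Function.Injective s ∧
      (⋃ k, Icc (x k) (x k + (s k : ℝ)) ×ˢ Icc (y k) (y k + (s k : ℝ)))
        = (univ : Set (ℝ × ℝ)) ∧
      (∀ k l, k ≠ l →
        Disjoint (Ioo (x k) (x k + (s k : ℝ)) ×ˢ Ioo (y k) (y k + (s k : ℝ)))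
                 (Ioo (x l) (x l + (s l : ℝ)) ×ˢ Ioo (y l) (y l + (s l : ℝ)))) := by
  obtain ⟨e⟩ : Nonempty (ℕ ≃ Fin 9 ⊕ ℕ) := nonempty_equiv_of_countable
  set t := Sum.elim moronSquares moronBox.spiralSquare ∘ e
  have h : IsPerfectTiling t univ := (isPerfectTiling_moronSquares.sumElim_spiralSquare
    (by decide) (by decide) (by decide)).comp_equiv e
  exact ⟨fun k => (t k).x, fun k => (t k).y, fun k => (t k).side, h.side_pos, h.injective_side,
    h.iUnion_Icc, fun _ _ hkl => h.pairwise_disjoint_Ioo hkl⟩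
end

section
/- If a square is partitioned into finitely many rectangles each with side ratio R or 1/R (R > 0), then R is algebraic over the rationals, i.e., R is a root of a nonzero polynomial with integer coefficients. -/
/-!
Dehn's argument. For a biadditive `B`, the quantity `B w h` is additive under partitions of
rectangles: refining by the grid of all corner coordinates writes every tile, and the square,
as a union of grid cells. If `R` were transcendental over `ℚ`, then `ℚ(R) ≅ ℚ(X) ≅ ℚ(-R)`, and
composing this isomorphism with a `ℚ(R)`-linear functional `ℝ → ℚ(R)` taking `1` to `1` gives
an additive `f : ℝ → ℝ` with `f 1 = 1` and `f (R v) = -R f v`. With `B w h = f w * f h` the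
square gets area `1`, while a tile with `w = R h` gets `-R (f h)^2 ≤ 0`.
-/

open Set Polynomial

theorem exists_addMonoidHom_map_one_map_mul {K L M : Type*} [Field K] [Ring L] [Nontrivial L]
    [Semiring M] (φ : K →+* L) (ψ : K →+* M) :
    ∃ f : L →+ M, f 1 = 1 ∧ ∀ c v, f (φ c * v) = ψ c * f v := by
  let _ : Module K L := Module.compHom L φ
  obtain ⟨ℓ, hℓ⟩ := Module.Projective.exists_dual_eq_one K (one_ne_zero : (1 : L) ≠ 0)
  refine ⟨ψ.toAddMonoidHom.comp ℓ.toAddMonoidHom, by simp [hℓ], fun c v => ?_⟩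
  change ψ (ℓ (c • v)) = ψ c * ψ (ℓ v)
  rw [map_smul, smul_eq_mul, map_mul]

theorem Transcendental.neg {R A : Type*} [CommRing R] [Ring A] [Algebra R A] {a : A}
    (ha : Transcendental R a) : Transcendental R (-a) :=
  fun h => ha (by simpa using h.neg)

open IntermediateField in
theorem Transcendental.exists_addMonoidHom_map_mul_eq_neg_mul {K L : Type*} [Field K] [Field L]
    [Algebra K L] {r : L} (hr : Transcendental K r) :
    ∃ f : L →+ L, f 1 = 1 ∧ ∀ v, f (r * v) = -r * f v := by
  let φ : RatFunc K →ₐ[K] L := K⟮r⟯.val.comp (RatFunc.algEquivOfTranscendental r hr).toAlgHom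
  let ψ : RatFunc K →ₐ[K] L :=
    K⟮-r⟯.val.comp (RatFunc.algEquivOfTranscendental (-r) hr.neg).toAlgHom
  obtain ⟨f, hf1, hf⟩ := exists_addMonoidHom_map_one_map_mul φ.toRingHom ψ.toRingHom
  exact ⟨f, hf1, fun v => by simpa [φ, ψ] using hf RatFunc.X v⟩

theorem apply_mul_apply_nonpos_of_ratio {f : ℝ →+ ℝ} {R : ℝ} (hf : ∀ v, f (R * v) = -R * f v)
    {w h : ℝ} (hw : 0 < w) (hh : 0 < h) (hratio : w / h = R ∨ w / h = 1 / R) :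
    f w * f h ≤ 0 := by
  have key : ∀ {u v : ℝ}, 0 < u → 0 < v → v / u = R → f u * f v ≤ 0 := by
    intro u v hu hv hvu
    rw [← div_mul_cancel₀ v hu.ne', hvu, hf]
    nlinarith [hvu ▸ div_nonneg hv.le hu.le, sq_nonneg (f u)]
  rcases hratio with hr | hr
  · rw [mul_comm]; exact key hh hw hr
  · exact key hw hh (by rw [← inv_div, hr, one_div, inv_inv])

theorem Set.Finite.exists_strictMono_of_subset_Icc {s : Set ℝ} (hs : s.Finite) {p q : ℝ}
    (hpq : p ≤ q) (hsub : s ⊆ Icc p q) :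
    ∃ (m : ℕ) (t : ℕ → ℝ), StrictMono t ∧ t 0 = p ∧ t m = q ∧ s ⊆ range t := by
  classical
  set S := insert p (insert q hs.toFinset)
  have hS0 : 0 < S.card := Finset.card_pos.2 ⟨p, Finset.mem_insert_self _ _⟩
  obtain ⟨m, hm⟩ : ∃ m, S.card = m + 1 := ⟨S.card - 1, by omega⟩
  set e := S.orderEmbOfFin hm
  have hS : ∀ a ∈ S, a ∈ Icc p q := by
    intro a ha
    simp only [S, Finset.mem_insert, Finite.mem_toFinset] at ha
    rcases ha with rfl | rfl | ha
    exacts [left_mem_Icc.2 hpq, right_mem_Icc.2 hpq, hsub ha]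
  -- `e` enumerates `S` increasingly; past its last index `m` we continue with slope `1`.
  refine ⟨m, fun j => e ⟨min j m, by omega⟩ + (j - m : ℕ), fun j j' hjj' => ?_, ?_, ?_, ?_⟩
  · rcases le_or_gt j' m with hj' | hj'
    · have : e ⟨min j m, by omega⟩ < e ⟨min j' m, by omega⟩ :=
        e.strictMono (by simp only [Fin.mk_lt_mk]; omega)
      simp only [show j - m = 0 by omega, show j' - m = 0 by omega]
      simpa using this
    · have : e ⟨min j m, by omega⟩ ≤ e ⟨min j' m, by omega⟩ :=
        e.monotone (by simp only [Fin.mk_le_mk]; omega)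
      exact add_lt_add_of_le_of_lt this (by exact_mod_cast (by omega : j - m < j' - m))
  · simp only [Nat.zero_sub, Nat.cast_zero, add_zero]
    rw [show (⟨min 0 m, _⟩ : Fin (m + 1)) = ⟨0, by omega⟩ by simp,
      Finset.orderEmbOfFin_zero hm (by omega), Finset.min'_eq_iff]
    exact ⟨Finset.mem_insert_self p _, fun b hb => (hS b hb).1⟩
  · simp only [Nat.sub_self, Nat.cast_zero, add_zero]
    rw [show (⟨min m m, _⟩ : Fin (m + 1)) = ⟨m + 1 - 1, by omega⟩ by simp,
      Finset.orderEmbOfFin_last hm (by omega), Finset.max'_eq_iff]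
    exact ⟨by simp [S], fun b hb => (hS b hb).2⟩
  · intro a ha
    obtain ⟨k, hk⟩ : a ∈ range e := by
      rw [Finset.range_orderEmbOfFin]; simp [S, ha]
    refine ⟨k, ?_⟩
    simp only [show (k : ℕ) - m = 0 by omega, Nat.cast_zero, add_zero]
    rw [show (⟨min k m, _⟩ : Fin (m + 1)) = k from Fin.ext (by simp; omega), hk]

namespace StrictMono

variable {α : Type*} [Preorder α] {t : ℕ → α} {a b k : ℕ} {z : α}

theorem mem_Ioo_of_mem_Ico (ht : StrictMono t) (hz : z ∈ Ioo (t k) (t (k + 1)))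
    (hk : k ∈ Finset.Ico a b) : z ∈ Ioo (t a) (t b) := by
  rw [Finset.mem_Ico] at hk
  exact ⟨(ht.monotone hk.1).trans_lt hz.1, hz.2.trans_le (ht.monotone hk.2)⟩

theorem mem_Ico_of_mem_Icc (ht : StrictMono t) (hz : z ∈ Ioo (t k) (t (k + 1)))
    (hab : z ∈ Icc (t a) (t b)) : k ∈ Finset.Ico a b := by
  rw [Finset.mem_Ico]
  exact ⟨Nat.lt_succ_iff.1 (ht.lt_iff_lt.1 (hab.1.trans_lt hz.2)),
    ht.lt_iff_lt.1 (hz.1.trans_le hab.2)⟩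

end StrictMono

theorem sum_Ico_prod_Ico_biadditive {G : Type*} [AddCommGroup G] (B : ℝ →+ ℝ →+ G)
    (t u : ℕ → ℝ) {a b c d : ℕ} (hab : a ≤ b) (hcd : c ≤ d) :
    ∑ p ∈ Finset.Ico a b ×ˢ Finset.Ico c d, B (t (p.1 + 1) - t p.1) (u (p.2 + 1) - u p.2)
      = B (t b - t a) (u d - u c) := by
  rw [← Finset.sum_Ico_sub t hab, ← Finset.sum_Ico_sub u hcd, Finset.sum_product]
  simp only [map_sum, AddMonoidHom.finsetSum_apply]
  exact Finset.sum_comm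

theorem sum_biadditive_eq_of_grid_partition {ι G : Type*} [Fintype ι] [AddCommGroup G]
    (B : ℝ →+ ℝ →+ G) {t u : ℕ → ℝ} (ht : StrictMono t) (hu : StrictMono u) {m m' : ℕ}
    {a b c d : ι → ℕ} (hab : ∀ i, a i ≤ b i) (hcd : ∀ i, c i ≤ d i)
    (hcover : ⋃ i, Icc (t (a i)) (t (b i)) ×ˢ Icc (u (c i)) (u (d i))
      = Icc (t 0) (t m) ×ˢ Icc (u 0) (u m'))
    (hdisj : Pairwise fun i j => Disjoint (Ioo (t (a i)) (t (b i)) ×ˢ Ioo (u (c i)) (u (d i)))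
      (Ioo (t (a j)) (t (b j)) ×ˢ Ioo (u (c j)) (u (d j)))) :
    ∑ i, B (t (b i) - t (a i)) (u (d i) - u (c i)) = B (t m - t 0) (u m' - u 0) := by
  classical
  set cells : ι → Finset (ℕ × ℕ) := fun i => Finset.Ico (a i) (b i) ×ˢ Finset.Ico (c i) (d i)
  have hcell : ∀ p : ℕ × ℕ, (Ioo (t p.1) (t (p.1 + 1)) ×ˢ Ioo (u p.2) (u (p.2 + 1))).Nonempty :=
    fun p => (nonempty_Ioo.2 (ht p.1.lt_succ_self)).prod (nonempty_Ioo.2 (hu p.2.lt_succ_self))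
  choose z hz using hcell
  have hpd : Set.PairwiseDisjoint ↑(Finset.univ : Finset ι) cells := by
    intro i _ j _ hij
    refine Finset.disjoint_left.2 fun p hi hj => ?_
    rw [Finset.mem_product] at hi hj
    exact Set.disjoint_left.1 (hdisj hij)
      ⟨ht.mem_Ioo_of_mem_Ico (hz p).1 hi.1, hu.mem_Ioo_of_mem_Ico (hz p).2 hi.2⟩
      ⟨ht.mem_Ioo_of_mem_Ico (hz p).1 hj.1, hu.mem_Ioo_of_mem_Ico (hz p).2 hj.2⟩
  have hunion : Finset.univ.biUnion cells = Finset.Ico 0 m ×ˢ Finset.Ico 0 m' := by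
    ext p
    simp only [Finset.mem_biUnion, Finset.mem_univ, true_and, Finset.mem_product, cells]
    constructor
    · rintro ⟨i, hk, hl⟩
      have hcorner : (t (b i), u (d i)) ∈ Icc (t 0) (t m) ×ˢ Icc (u 0) (u m') :=
        hcover ▸ mem_iUnion_of_mem i
          ⟨right_mem_Icc.2 (ht.monotone (hab i)), right_mem_Icc.2 (hu.monotone (hcd i))⟩
      simp only [Finset.mem_Ico] at hk hl ⊢
      exact ⟨⟨p.1.zero_le, hk.2.trans_le (ht.le_iff_le.1 hcorner.1.2)⟩,
        ⟨p.2.zero_le, hl.2.trans_le (hu.le_iff_le.1 hcorner.2.2)⟩⟩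
    · rintro ⟨hk, hl⟩
      have hzsq : z p ∈ Icc (t 0) (t m) ×ˢ Icc (u 0) (u m') :=
        ⟨Ioo_subset_Icc_self (ht.mem_Ioo_of_mem_Ico (hz p).1 hk),
          Ioo_subset_Icc_self (hu.mem_Ioo_of_mem_Ico (hz p).2 hl)⟩
      obtain ⟨i, hi⟩ := mem_iUnion.1 (hcover ▸ hzsq)
      exact ⟨i, ht.mem_Ico_of_mem_Icc (hz p).1 hi.1, hu.mem_Ico_of_mem_Icc (hz p).2 hi.2⟩
  calc ∑ i, B (t (b i) - t (a i)) (u (d i) - u (c i))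
      = ∑ i, ∑ p ∈ cells i, B (t (p.1 + 1) - t p.1) (u (p.2 + 1) - u p.2) :=
        Finset.sum_congr rfl fun i _ => (sum_Ico_prod_Ico_biadditive B t u (hab i) (hcd i)).symm
    _ = ∑ p ∈ Finset.Ico 0 m ×ˢ Finset.Ico 0 m',
          B (t (p.1 + 1) - t p.1) (u (p.2 + 1) - u p.2) := by
        rw [← Finset.sum_biUnion hpd, hunion]
    _ = B (t m - t 0) (u m' - u 0) := sum_Ico_prod_Ico_biadditive B t u m.zero_le m'.zero_le

theorem sum_biadditive_eq_of_partition {ι G : Type*} [Fintype ι] [AddCommGroup G]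
    (B : ℝ →+ ℝ →+ G) {p q : ℝ} (hp : 0 ≤ p) (hq : 0 ≤ q) (x y w h : ι → ℝ)
    (hw : ∀ i, 0 ≤ w i) (hh : ∀ i, 0 ≤ h i)
    (hcover : ⋃ i, Icc (x i) (x i + w i) ×ˢ Icc (y i) (y i + h i) = Icc 0 p ×ˢ Icc 0 q)
    (hdisj : Pairwise fun i j => Disjoint (Ioo (x i) (x i + w i) ×ˢ Ioo (y i) (y i + h i))
      (Ioo (x j) (x j + w j) ×ˢ Ioo (y j) (y j + h j))) :
    ∑ i, B (w i) (h i) = B p q := by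
  have hcorner : ∀ i, (x i, y i) ∈ Icc 0 p ×ˢ Icc 0 q ∧
      (x i + w i, y i + h i) ∈ Icc 0 p ×ˢ Icc 0 q := fun i =>
    ⟨hcover ▸ mem_iUnion_of_mem i ⟨left_mem_Icc.2 (by linarith [hw i]),
        left_mem_Icc.2 (by linarith [hh i])⟩,
      hcover ▸ mem_iUnion_of_mem i ⟨right_mem_Icc.2 (by linarith [hw i]),
        right_mem_Icc.2 (by linarith [hh i])⟩⟩
  obtain ⟨m, t, ht, ht0, htm, hxt⟩ :=
    ((finite_range x).union (finite_range fun i => x i + w i)).exists_strictMono_of_subset_Icc hp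
      (union_subset (range_subset_iff.2 fun i => (hcorner i).1.1)
        (range_subset_iff.2 fun i => (hcorner i).2.1))
  obtain ⟨m', u, hu, hu0, hum, hyu⟩ :=
    ((finite_range y).union (finite_range fun i => y i + h i)).exists_strictMono_of_subset_Icc hq
      (union_subset (range_subset_iff.2 fun i => (hcorner i).1.2)
        (range_subset_iff.2 fun i => (hcorner i).2.2))
  choose a ha using fun i => hxt (Or.inl (mem_range_self i))
  choose b hb using fun i => hxt (Or.inr (mem_range_self i))
  choose c hc using fun i => hyu (Or.inl (mem_range_self i))
  choose d hd using fun i => hyu (Or.inr (mem_range_self i))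
  have hw' : ∀ i, t (b i) - t (a i) = w i := fun i => by rw [ha, hb]; ring
  have hh' : ∀ i, u (d i) - u (c i) = h i := fun i => by rw [hc, hd]; ring
  rw [show Icc (0 : ℝ) p ×ˢ Icc (0 : ℝ) q = Icc (t 0) (t m) ×ˢ Icc (u 0) (u m') by
    rw [ht0, htm, hu0, hum]] at hcover
  simp_rw [← hb, ← hd, ← ha, ← hc] at hcover hdisj
  have key := sum_biadditive_eq_of_grid_partition B ht hu
    (fun i => ht.le_iff_le.1 (by rw [ha, hb]; linarith [hw i]))
    (fun i => hu.le_iff_le.1 (by rw [hc, hd]; linarith [hh i])) hcover hdisj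
  simpa only [hw', hh', ht0, htm, hu0, hum, sub_zero] using key

theorem ratio_algebraic_of_square_partition_general (R : ℝ)
    (n : ℕ) (x y w h : Fin n → ℝ) (hw : ∀ i, 0 < w i) (hh : ∀ i, 0 < h i)
    (hratio : ∀ i, w i / h i = R ∨ w i / h i = 1 / R)
    (hcover : (⋃ i, Icc (x i) (x i + w i) ×ˢ Icc (y i) (y i + h i))
      = Icc (0:ℝ) 1 ×ˢ Icc (0:ℝ) 1)
    (hdisj : ∀ i j, i ≠ j →
      Disjoint (Ioo (x i) (x i + w i) ×ˢ Ioo (y i) (y i + h i))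
               (Ioo (x j) (x j + w j) ×ˢ Ioo (y j) (y j + h j))) :
    ∃ P : ℤ[X], P ≠ 0 ∧ aeval R P = 0 := by
  by_contra hR
  have hRt : Transcendental ℚ R := fun hal => hR ((IsFractionRing.isAlgebraic_iff ℤ ℚ ℝ).2 hal)
  obtain ⟨f, hf1, hfR⟩ := hRt.exists_addMonoidHom_map_mul_eq_neg_mul
  have harea := sum_biadditive_eq_of_partition ((AddMonoidHom.mul.compl₂ f).comp f) zero_le_one
    zero_le_one x y w h (fun i => (hw i).le) (fun i => (hh i).le) hcover hdisj
  have hnonpos : ∑ i, f (w i) * f (h i) ≤ 0 :=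
    Finset.sum_nonpos fun i _ => apply_mul_apply_nonpos_of_ratio hfR (hw i) (hh i) (hratio i)
  simp only [AddMonoidHom.comp_apply, AddMonoidHom.compl₂_apply, AddMonoidHom.mul_apply, hf1,
    mul_one] at harea
  linarith

/-- If the unit square is partitioned into finitely many axis-parallel
rectangles each of side ratio (horizontal/vertical) `R` or `1/R`, where `R > 0`,
then `R` is a root of a nonzero polynomial with integer coefficients. -/
theorem ratio_algebraic_of_square_partition (R : ℝ) (hR : 0 < R)
    (n : ℕ) (x y w h : Fin n → ℝ) (hw : ∀ i, 0 < w i) (hh : ∀ i, 0 < h i)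
    (hratio : ∀ i, w i / h i = R ∨ w i / h i = 1 / R)
    (hcover : (⋃ i, Icc (x i) (x i + w i) ×ˢ Icc (y i) (y i + h i))
      = Icc (0:ℝ) 1 ×ˢ Icc (0:ℝ) 1)
    (hdisj : ∀ i j, i ≠ j →
      Disjoint (Ioo (x i) (x i + w i) ×ˢ Ioo (y i) (y i + h i))
               (Ioo (x j) (x j + w j) ×ˢ Ioo (y j) (y j + h j))) :
    ∃ P : ℤ[X], P ≠ 0 ∧ aeval R P = 0 :=
  ratio_algebraic_of_square_partition_general R n x y w h hw hh hratio hcover hdisj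
end

section
/- A square cannot be partitioned into finitely many rectangles each having side ratio √2 or 1/√2. -/
/-!
Dehn's argument. Regard `ℝ` as a vector space over `ℚ(√2)` and compose a linear functional
fixing `1` with the conjugation `√2 ↦ -√2`: this gives an additive `f : ℝ → ℝ` with `f 1 = 1`
and `f (√2 t) = -√2 f t`. For any tiling of a rectangle by rectangles, the "area"
`(f x' - f x) (f y' - f y)` is additive, by refining everything to the grid spanned by all
the coordinates. It equals `1` on the unit square but `-√2 f(h)² ≤ 0` on a tile of
side ratio `√2` or `1/√2`.
-/

section Dehn

open Polynomial

theorem exists_addMonoidHom_map_mul_eq_mul {K L : Type*} [Field K] [Field L] (φ σ : K →+* L) :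
    ∃ f : L →+ L, f 1 = 1 ∧ ∀ c t, f (φ c * t) = σ c * f t := by
  let _ : Algebra K L := φ.toAlgebra
  obtain ⟨g, hg⟩ := (Algebra.linearMap K L).exists_leftInverse_of_injective
    (LinearMap.ker_eq_bot.2 (algebraMap K L).injective)
  have hg1 : g 1 = 1 := by simpa using LinearMap.congr_fun hg 1
  refine ⟨σ.toAddMonoidHom.comp g.toAddMonoidHom, by simp [hg1], fun c t => ?_⟩
  have : g (φ c * t) = c * g t := g.map_smul c t
  simp [this]

theorem irreducible_X_sq_sub_two : Irreducible (X ^ 2 - C 2 : ℚ[X]) :=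
  X_pow_sub_C_irreducible_of_prime Nat.prime_two fun b hb =>
    (by norm_num : ¬ IsSquare (2 : ℚ)) ⟨b, by rw [← hb, sq]⟩

theorem exists_addMonoidHom_map_sqrt_two_mul :
    ∃ f : ℝ →+ ℝ, f 1 = 1 ∧ ∀ t, f (√2 * t) = -√2 * f t := by
  have := Fact.mk irreducible_X_sq_sub_two
  have hroot : ∀ s : ℝ, s ^ 2 = 2 → (X ^ 2 - C 2 : ℚ[X]).eval₂ (algebraMap ℚ ℝ) s = 0 := by
    intro s hs; simp [hs]
  obtain ⟨f, hf1, hf⟩ := exists_addMonoidHom_map_mul_eq_mul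
    (AdjoinRoot.lift _ _ (hroot √2 (by simp)))
    (AdjoinRoot.lift _ _ (hroot (-√2) (by simp)))
  refine ⟨f, hf1, fun t => ?_⟩
  simpa using hf (AdjoinRoot.root _) t

end Dehn

section NextIn

open Finset

variable {α : Type*} [LinearOrder α] {X : Finset α} {p z : α}

/-- The least element of `X` above `p` (junk value `p` if there is none). -/
def nextIn (X : Finset α) (p : α) : α :=
  if h : {z ∈ X | p < z}.Nonempty then {z ∈ X | p < z}.min' h else p

theorem nextIn_spec (hz : z ∈ X) (hpz : p < z) :
    nextIn X p ∈ X ∧ p < nextIn X p ∧ nextIn X p ≤ z := by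
  have hne : {z ∈ X | p < z}.Nonempty := ⟨z, mem_filter.2 ⟨hz, hpz⟩⟩
  have hmem := mem_filter.1 (min'_mem _ hne)
  rw [nextIn, dif_pos hne]
  exact ⟨hmem.1, hmem.2, min'_le _ _ (mem_filter.2 ⟨hz, hpz⟩)⟩

theorem le_of_mem_of_lt_nextIn (hz : z ∈ X) (h : z < nextIn X p) : z ≤ p :=
  not_lt.1 fun hpz => (nextIn_spec hz hpz).2.2.not_gt h

variable {M : Type*} [AddCommGroup M]

theorem sum_sub_nextIn {a b : α} (f : α → M) (ha : a ∈ X) (hb : b ∈ X) (hab : a ≤ b) :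
    ∑ p ∈ X with a ≤ p ∧ p < b, (f (nextIn X p) - f p) = f b - f a := by
  set U := {p ∈ X | a ≤ p ∧ p ≤ b}
  have hS : {p ∈ X | a ≤ p ∧ p < b} = U.erase b := by
    ext p; simp only [U, mem_filter, mem_erase, lt_iff_le_and_ne]; tauto
  have hT : {q ∈ X | a < q ∧ q ≤ b} = U.erase a := by
    ext q; simp only [U, mem_filter, mem_erase, lt_iff_le_and_ne]; grind
  have hshift : ∑ p ∈ X with a ≤ p ∧ p < b, f (nextIn X p) = ∑ q ∈ X with a < q ∧ q ≤ b, f q := by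
    refine sum_nbij (nextIn X) ?_ ?_ ?_ (fun _ _ => rfl)
    · intro p hp
      obtain ⟨hpX, hap, hpb⟩ := mem_filter.1 hp
      obtain ⟨hnX, hpn, hnb⟩ := nextIn_spec hb hpb
      exact mem_filter.2 ⟨hnX, hap.trans_lt hpn, hnb⟩
    · refine StrictMonoOn.injOn fun p hp p' hp' hpp' => ?_
      obtain ⟨-, -, hp'b⟩ := mem_filter.1 hp'
      exact ((nextIn_spec (mem_filter.1 hp').1 hpp').2.2).trans_lt (nextIn_spec hb hp'b).2.1
    · intro q hq
      obtain ⟨hqX, haq, hqb⟩ := mem_filter.1 hq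
      have hne : {p ∈ X | p < q}.Nonempty := ⟨a, mem_filter.2 ⟨ha, haq⟩⟩
      obtain ⟨hpX, hpq⟩ := mem_filter.1 (max'_mem _ hne)
      set p := max' _ hne
      obtain ⟨hnX, hpn, hnq⟩ := nextIn_spec hqX hpq
      refine ⟨p, mem_filter.2 ⟨hpX, le_max' _ a (mem_filter.2 ⟨ha, haq⟩), hpq.trans_le hqb⟩,
        hnq.antisymm (not_lt.1 fun hnq' => hpn.not_ge ?_)⟩
      exact le_max' _ _ (mem_filter.2 ⟨hnX, hnq'⟩)
  have hbU : b ∈ U := mem_filter.2 ⟨hb, hab, le_rfl⟩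
  have haU : a ∈ U := mem_filter.2 ⟨ha, le_rfl, hab⟩
  rw [sum_sub_distrib, hshift, hS, hT, sum_erase_eq_sub haU, sum_erase_eq_sub hbU]
  abel

theorem sub_eq_sum_ite_mem_Ico {a b u v : α} (f : α → M) (hu : u ∈ X) (hv : v ∈ X) (huv : u ≤ v)
    (hau : a ≤ u) (hvb : v ≤ b) :
    f v - f u =
      ∑ p ∈ X with a ≤ p ∧ p < b, if p ∈ Set.Ico u v then f (nextIn X p) - f p else 0 := by
  rw [← sum_filter, filter_filter, ← sum_sub_nextIn f hu hv huv]
  refine sum_congr (filter_congr fun p _ => ?_) fun _ _ => rfl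
  simp only [Set.mem_Ico]
  constructor
  · exact fun h => ⟨⟨hau.trans h.1, h.2.trans_le hvb⟩, h⟩
  · exact fun h => h.2

end NextIn

section Midpoint

variable {X : Finset ℝ} {p u v : ℝ}

theorem midpoint_nextIn_mem_Ioo (hv : v ∈ X) (hp : p ∈ Set.Ico u v) :
    (p + nextIn X p) / 2 ∈ Set.Ioo u v := by
  obtain ⟨-, hpn, hnv⟩ := nextIn_spec hv hp.2
  constructor <;> linarith [hp.1]

theorem mem_Ico_of_midpoint_nextIn_mem_Icc {z : ℝ} (hu : u ∈ X) (hz : z ∈ X) (hpz : p < z)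
    (hm : (p + nextIn X p) / 2 ∈ Set.Icc u v) : p ∈ Set.Ico u v := by
  obtain ⟨-, hpn, -⟩ := nextIn_spec hz hpz
  exact ⟨le_of_mem_of_lt_nextIn hu (by linarith [hm.1]), by linarith [hm.2]⟩

end Midpoint

section Tiling

open Set

variable {ι : Type*} {x x' y y' : ι → ℝ} {a b c d : ℝ}

theorem tile_bounds_of_iUnion_eq (hx : ∀ i, x i ≤ x' i) (hy : ∀ i, y i ≤ y' i)
    (hcover : ⋃ i, Icc (x i) (x' i) ×ˢ Icc (y i) (y' i) = Icc a b ×ˢ Icc c d) (i : ι) :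
    (a ≤ x i ∧ x' i ≤ b) ∧ (c ≤ y i ∧ y' i ≤ d) := by
  have hsub := hcover ▸ subset_iUnion (fun i => Icc (x i) (x' i) ×ˢ Icc (y i) (y' i)) i
  rw [prod_subset_prod_iff' ((Set.nonempty_Icc.2 (hx i)).prod (Set.nonempty_Icc.2 (hy i))),
    Icc_subset_Icc_iff (hx i), Icc_subset_Icc_iff (hy i)] at hsub
  exact hsub

variable [Fintype ι]

noncomputable def breakpoints (a b : ℝ) (x x' : ι → ℝ) : Finset ℝ :=
  insert a (insert b (Finset.univ.image x ∪ Finset.univ.image x'))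

theorem left_mem_breakpoints : a ∈ breakpoints a b x x' := by simp [breakpoints]

theorem right_mem_breakpoints : b ∈ breakpoints a b x x' := by simp [breakpoints]

theorem lower_mem_breakpoints {i : ι} : x i ∈ breakpoints a b x x' := by simp [breakpoints]

theorem upper_mem_breakpoints {i : ι} : x' i ∈ breakpoints a b x x' := by simp [breakpoints]

theorem existsUnique_tile_mem_Ico
    (hcover : ⋃ i, Icc (x i) (x' i) ×ˢ Icc (y i) (y' i) = Icc a b ×ˢ Icc c d)
    (hdisj : Pairwise fun i j =>
      Disjoint (Ioo (x i) (x' i) ×ˢ Ioo (y i) (y' i)) (Ioo (x j) (x' j) ×ˢ Ioo (y j) (y' j)))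
    {p q : ℝ} (hp : p ∈ Ico a b) (hq : q ∈ Ico c d) :
    ∃! i, p ∈ Ico (x i) (x' i) ∧ q ∈ Ico (y i) (y' i) := by
  set X := breakpoints a b x x'
  set Y := breakpoints c d y y'
  -- No breakpoint lies inside the grid cell `[p, nextIn X p) × [q, nextIn Y q)`: a closed tile
  -- contains its centre iff the half-open tile contains `(p, q)`, and then the centre is interior.
  have hmp := midpoint_nextIn_mem_Ioo (X := X) right_mem_breakpoints hp
  have hmq := midpoint_nextIn_mem_Ioo (X := Y) right_mem_breakpoints hq
  obtain ⟨i, hi⟩ := mem_iUnion.1 (hcover ▸ mk_mem_prod (Ioo_subset_Icc_self hmp)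
    (Ioo_subset_Icc_self hmq))
  have hpi :=
    mem_Ico_of_midpoint_nextIn_mem_Icc lower_mem_breakpoints right_mem_breakpoints hp.2 hi.1
  have hqi :=
    mem_Ico_of_midpoint_nextIn_mem_Icc lower_mem_breakpoints right_mem_breakpoints hq.2 hi.2
  have hmid : ∀ j, p ∈ Ico (x j) (x' j) ∧ q ∈ Ico (y j) (y' j) →
      ((p + nextIn X p) / 2, (q + nextIn Y q) / 2) ∈ Ioo (x j) (x' j) ×ˢ Ioo (y j) (y' j) :=
    fun j hj => ⟨midpoint_nextIn_mem_Ioo upper_mem_breakpoints hj.1,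
      midpoint_nextIn_mem_Ioo upper_mem_breakpoints hj.2⟩
  exact ⟨i, ⟨hpi, hqi⟩, fun j hj => by_contra fun hji =>
    disjoint_left.1 (hdisj hji) (hmid j hj) (hmid i ⟨hpi, hqi⟩)⟩

theorem sum_sub_mul_sub_of_tiling {R : Type*} [NonUnitalNonAssocRing R] (f g : ℝ → R) (hab : a ≤ b)
    (hcd : c ≤ d) (hx : ∀ i, x i ≤ x' i) (hy : ∀ i, y i ≤ y' i)
    (hcover : ⋃ i, Icc (x i) (x' i) ×ˢ Icc (y i) (y' i) = Icc a b ×ˢ Icc c d)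
    (hdisj : Pairwise fun i j =>
      Disjoint (Ioo (x i) (x' i) ×ˢ Ioo (y i) (y' i)) (Ioo (x j) (x' j) ×ˢ Ioo (y j) (y' j))) :
    ∑ i, (f (x' i) - f (x i)) * (g (y' i) - g (y i)) = (f b - f a) * (g d - g c) := by
  set X := breakpoints a b x x'
  set Y := breakpoints c d y y'
  set Δf := fun p => f (nextIn X p) - f p
  set Δg := fun q => g (nextIn Y q) - g q
  have hbounds := tile_bounds_of_iUnion_eq hx hy hcover
  have hcell : ∀ p ∈ X.filter (fun p => a ≤ p ∧ p < b), ∀ q ∈ Y.filter (fun q => c ≤ q ∧ q < d),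
      ∑ i, (if p ∈ Ico (x i) (x' i) ∧ q ∈ Ico (y i) (y' i) then Δf p * Δg q else 0) =
        Δf p * Δg q := by
    intro p hp q hq
    obtain ⟨i, hi, huniq⟩ := existsUnique_tile_mem_Ico hcover hdisj (Finset.mem_filter.1 hp).2
      (Finset.mem_filter.1 hq).2
    rw [Finset.sum_eq_single i (fun j _ hji => if_neg fun hj => hji (huniq j hj))
      (fun h => (h (Finset.mem_univ i)).elim), if_pos hi]
  calc ∑ i, (f (x' i) - f (x i)) * (g (y' i) - g (y i))
      = ∑ i, ∑ p ∈ X.filter (fun p => a ≤ p ∧ p < b), ∑ q ∈ Y.filter (fun q => c ≤ q ∧ q < d),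
          if p ∈ Ico (x i) (x' i) ∧ q ∈ Ico (y i) (y' i) then Δf p * Δg q else 0 := by
        refine Finset.sum_congr rfl fun i _ => ?_
        rw [sub_eq_sum_ite_mem_Ico (X := X) f lower_mem_breakpoints upper_mem_breakpoints (hx i)
            (hbounds i).1.1 (hbounds i).1.2,
          sub_eq_sum_ite_mem_Ico (X := Y) g lower_mem_breakpoints upper_mem_breakpoints (hy i)
            (hbounds i).2.1 (hbounds i).2.2, Finset.sum_mul_sum]
        simp_rw [ite_zero_mul_ite_zero]
        rfl
    _ = ∑ p ∈ X.filter (fun p => a ≤ p ∧ p < b), ∑ q ∈ Y.filter (fun q => c ≤ q ∧ q < d),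
          Δf p * Δg q := by
        rw [Finset.sum_comm]
        refine Finset.sum_congr rfl fun p hp => ?_
        rw [Finset.sum_comm]
        exact Finset.sum_congr rfl (hcell p hp)
    _ = (f b - f a) * (g d - g c) := by
        rw [← Finset.sum_mul_sum, sum_sub_nextIn f left_mem_breakpoints right_mem_breakpoints hab,
          sum_sub_nextIn g left_mem_breakpoints right_mem_breakpoints hcd]

end Tiling

theorem mul_nonpos_of_map_mul_eq_neg_mul {r w h : ℝ} (f : ℝ → ℝ) (hr : 0 ≤ r)
    (hf : ∀ t, f (r * t) = -r * f t) (hwh : w = r * h ∨ h = r * w) : f w * f h ≤ 0 := by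
  rcases hwh with hwh | hwh <;> rw [hwh, hf]
  · nlinarith [mul_self_nonneg (f h)]
  · nlinarith [mul_self_nonneg (f w)]

theorem eq_sqrt_two_mul_or_of_div_eq {w h : ℝ} (hh : 0 < h)
    (hr : w / h = √2 ∨ w / h = 1 / √2) : w = √2 * h ∨ h = √2 * w := by
  have hs : (0 : ℝ) < √2 := by positivity
  rcases hr with hr | hr
  · exact Or.inl ((div_eq_iff hh.ne').1 hr)
  · rw [div_eq_div_iff hh.ne' hs.ne'] at hr
    exact Or.inr (by linarith)

open Set

/-- A square cannot be partitioned into finitely many axis-parallel rectangles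
each having side ratio (horizontal/vertical) `√2` or `1/√2`. -/
theorem no_square_partition_ratio_sqrt_two :
    ¬ ∃ (n : ℕ) (x y w h : Fin n → ℝ),
      (∀ i, 0 < w i) ∧ (∀ i, 0 < h i) ∧
      (∀ i, w i / h i = Real.sqrt 2 ∨ w i / h i = 1 / Real.sqrt 2) ∧
      (⋃ i, Icc (x i) (x i + w i) ×ˢ Icc (y i) (y i + h i))
        = Icc (0:ℝ) 1 ×ˢ Icc (0:ℝ) 1 ∧
      (∀ i j, i ≠ j →
        Disjoint (Ioo (x i) (x i + w i) ×ˢ Ioo (y i) (y i + h i))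
                 (Ioo (x j) (x j + w j) ×ˢ Ioo (y j) (y j + h j))) := by
  rintro ⟨n, x, y, w, h, hw, hh, hr, hcover, hdisj⟩
  obtain ⟨f, hf1, hf⟩ := exists_addMonoidHom_map_sqrt_two_mul
  have harea := sum_sub_mul_sub_of_tiling f f zero_le_one zero_le_one
    (fun i => le_add_of_nonneg_right (hw i).le) (fun i => le_add_of_nonneg_right (hh i).le)
    hcover hdisj
  simp only [map_add, add_sub_cancel_left, hf1, map_zero, sub_zero, mul_one] at harea
  have htile : ∀ i, f (w i) * f (h i) ≤ 0 := fun i =>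
    mul_nonpos_of_map_mul_eq_neg_mul f (Real.sqrt_nonneg 2) hf
      (eq_sqrt_two_mul_or_of_div_eq (hh i) (hr i))
  linarith [Finset.sum_nonpos fun i (_ : i ∈ Finset.univ) => htile i]
end

section
/- A square cannot be partitioned into finitely many rectangles each having side ratio 1+√2 or 1/(1+√2). -/
/-!
For any functions `F G : ℝ → R`, the weight `(F b - F a) * (G d - G c)` of the rectangle
`[a, b] × [c, d]` is additive over partitions: refining every rectangle to the grid spanned by all
the coordinates reduces this to telescoping sums. Take `F = G = f`, the conjugation `√2 ↦ -√2` of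
`ℚ(√2)` composed with a `ℚ(√2)`-linear functional `ℝ → ℚ(√2)` sending `1` to `1`. Then
`f ((1 + √2) t) = (1 - √2) f t`, so a rectangle of side ratio `1 + √2` or `1 / (1 + √2)` has weight
`(1 - √2) f(s)² ≤ 0`, while the unit square has weight `f 1 * f 1 = 1`.
-/

open Set

section Grid

variable {X : ℕ → ℝ} {M : ℕ}

theorem exists_strictMonoOn_grid {S : Set ℝ} (hS : S.Finite) {A B : ℝ} (hAB : A ≤ B)
    (hSAB : S ⊆ Icc A B) :
    ∃ (M : ℕ) (X : ℕ → ℝ), StrictMonoOn X (Iic M) ∧ X 0 = A ∧ X M = B ∧ S ⊆ X '' Iic M := by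
  classical
  set T : Finset ℝ := insert A (insert B hS.toFinset)
  have hT : ∀ t ∈ T, t ∈ Icc A B := by
    intro t ht
    simp only [T, Finset.mem_insert, Set.Finite.mem_toFinset] at ht
    rcases ht with rfl | rfl | ht
    exacts [⟨le_rfl, hAB⟩, ⟨hAB, le_rfl⟩, hSAB ht]
  have hAT : A ∈ T := Finset.mem_insert_self _ _
  have hBT : B ∈ T := Finset.mem_insert_of_mem (Finset.mem_insert_self _ _)
  have hk : 0 < T.card := Finset.card_pos.2 ⟨A, hAT⟩
  set e := T.orderEmbOfFin rfl
  refine ⟨T.card - 1, fun p => e ⟨min p (T.card - 1), by omega⟩, ?_, ?_, ?_, ?_⟩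
  · intro p hp q hq hpq
    simp only [mem_Iic] at hp hq
    exact e.strictMono (Fin.mk_lt_mk.2 (by omega))
  · have h0 : e ⟨0, hk⟩ = T.min' ⟨A, hAT⟩ := Finset.orderEmbOfFin_zero rfl hk
    simp only [Nat.zero_min, h0]
    exact le_antisymm (T.min'_le A hAT) (hT _ (T.min'_mem _)).1
  · have hM : e ⟨T.card - 1, by omega⟩ = T.max' ⟨A, hAT⟩ := Finset.orderEmbOfFin_last rfl hk
    simp only [min_self, hM]
    exact le_antisymm (hT _ (T.max'_mem _)).2 (T.le_max' B hBT)
  · intro t ht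
    have htT : t ∈ Set.range e := by
      rw [Finset.range_orderEmbOfFin]
      exact Finset.mem_insert_of_mem (Finset.mem_insert_of_mem (hS.mem_toFinset.2 ht))
    obtain ⟨⟨k, hk⟩, rfl⟩ := htT
    exact ⟨k, by simp only [mem_Iic]; omega, by simp only [min_eq_left (by omega : k ≤ T.card - 1)]⟩

theorem StrictMonoOn.midpoint_mem_Icc_iff (hX : StrictMonoOn X (Iic M)) {p i j : ℕ} (hp : p < M)
    (hi : i ≤ M) (hj : j ≤ M) :
    (X p + X (p + 1)) / 2 ∈ Icc (X i) (X j) ↔ i ≤ p ∧ p < j := by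
  have hle {k l : ℕ} (hk : k ≤ M) (hl : l ≤ M) : X k ≤ X l ↔ k ≤ l := hX.le_iff_le hk hl
  have hstep : X p < X (p + 1) := hX (show p ≤ M by omega) (show p + 1 ≤ M by omega) (by omega)
  constructor
  · rintro ⟨hil, hjr⟩
    constructor
    · by_contra! h
      linarith [(hle (show p + 1 ≤ M by omega) hi).2 h]
    · by_contra! h
      linarith [(hle hj (show p ≤ M by omega)).2 h]
  · rintro ⟨hip, hpj⟩
    have h1 := (hle hi (show p ≤ M by omega)).2 hip
    have h2 := (hle (show p + 1 ≤ M by omega) hj).2 hpj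
    constructor <;> linarith

theorem StrictMonoOn.midpoint_mem_Ioo_of_mem_Icc (hX : StrictMonoOn X (Iic M)) {p : ℕ} (hp : p < M)
    {s t : ℝ} (hs : s ∈ X '' Iic M) (ht : t ∈ X '' Iic M)
    (hmem : (X p + X (p + 1)) / 2 ∈ Icc s t) : (X p + X (p + 1)) / 2 ∈ Ioo s t := by
  obtain ⟨i, hi, rfl⟩ := hs
  obtain ⟨j, hj, rfl⟩ := ht
  obtain ⟨hip, hpj⟩ := (hX.midpoint_mem_Icc_iff hp hi hj).1 hmem
  obtain ⟨hil, hjr⟩ := hmem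
  have hne {k : ℕ} (hk : k ≤ M) : (X p + X (p + 1)) / 2 ≠ X k := fun h => by
    have := (hX.midpoint_mem_Icc_iff hp hk hk).1 (h ▸ ⟨le_rfl, le_rfl⟩)
    omega
  exact ⟨lt_of_le_of_ne hil (hne hi).symm, lt_of_le_of_ne hjr (hne hj)⟩

theorem StrictMonoOn.sum_ite_midpoint_mem_Icc {R : Type*} [AddCommGroup R]
    (hX : StrictMonoOn X (Iic M)) (F : ℝ → R) {s t : ℝ} (hs : s ∈ X '' Iic M)
    (ht : t ∈ X '' Iic M) (hst : s ≤ t) :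
    ∑ p ∈ Finset.range M,
      (if (X p + X (p + 1)) / 2 ∈ Icc s t then F (X (p + 1)) - F (X p) else 0) = F t - F s := by
  obtain ⟨i, hi, rfl⟩ := hs
  obtain ⟨j, hj, rfl⟩ := ht
  have hij : i ≤ j := (hX.le_iff_le hi hj).1 hst
  rw [← Finset.sum_filter, ← Finset.sum_Ico_sub (fun p => F (X p)) hij]
  congr 1
  ext p
  simp only [Finset.mem_filter, Finset.mem_range, Finset.mem_Ico]
  constructor
  · rintro ⟨hp, hmem⟩
    exact (hX.midpoint_mem_Icc_iff hp hi hj).1 hmem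
  · rintro ⟨hip, hpj⟩
    have hp : p < M := by simp only [mem_Iic] at hj; omega
    exact ⟨hp, (hX.midpoint_mem_Icc_iff hp hi hj).2 ⟨hip, hpj⟩⟩

end Grid

theorem sum_mul_sub_eq_of_iUnion_eq {ι R : Type*} [Fintype ι] [CommRing R] (F G : ℝ → R)
    {a b c d : ι → ℝ} {A B C D : ℝ} (hab : ∀ i, a i ≤ b i) (hcd : ∀ i, c i ≤ d i)
    (hAB : A ≤ B) (hCD : C ≤ D)
    (hcov : ⋃ i, Icc (a i) (b i) ×ˢ Icc (c i) (d i) = Icc A B ×ˢ Icc C D)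
    (hdisj : Pairwise fun i j =>
      Disjoint (Ioo (a i) (b i) ×ˢ Ioo (c i) (d i)) (Ioo (a j) (b j) ×ˢ Ioo (c j) (d j))) :
    ∑ i, (F (b i) - F (a i)) * (G (d i) - G (c i)) = (F B - F A) * (G D - G C) := by
  classical
  have hbox {i : ι} {z : ℝ × ℝ} (hz : z ∈ Icc (a i) (b i) ×ˢ Icc (c i) (d i)) :
      z ∈ Icc A B ×ˢ Icc C D := hcov ▸ mem_iUnion.2 ⟨i, hz⟩
  have hlo (i : ι) := hbox (z := (a i, c i)) ⟨⟨le_rfl, hab i⟩, ⟨le_rfl, hcd i⟩⟩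
  have hhi (i : ι) := hbox (z := (b i, d i)) ⟨⟨hab i, le_rfl⟩, ⟨hcd i, le_rfl⟩⟩
  obtain ⟨M, X, hX, hX0, hXM, haX⟩ := exists_strictMonoOn_grid
    ((finite_range a).union (finite_range b)) hAB
    (by rintro _ (⟨i, rfl⟩ | ⟨i, rfl⟩); exacts [(hlo i).1, (hhi i).1])
  obtain ⟨N, Y, hY, hY0, hYN, hcY⟩ := exists_strictMonoOn_grid
    ((finite_range c).union (finite_range d)) hCD
    (by rintro _ (⟨i, rfl⟩ | ⟨i, rfl⟩); exacts [(hlo i).2, (hhi i).2])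
  set u : ℕ → ℝ := fun p => (X p + X (p + 1)) / 2
  set v : ℕ → ℝ := fun q => (Y q + Y (q + 1)) / 2
  set cell : ℕ → ℕ → R := fun p q => (F (X (p + 1)) - F (X p)) * (G (Y (q + 1)) - G (Y q))
  set rect : ι → Set (ℝ × ℝ) := fun i => Icc (a i) (b i) ×ˢ Icc (c i) (d i)
  -- each rectangle is the union of the grid cells whose centre it contains
  have hweight (i : ι) : (F (b i) - F (a i)) * (G (d i) - G (c i)) =
      ∑ p ∈ Finset.range M, ∑ q ∈ Finset.range N, if (u p, v q) ∈ rect i then cell p q else 0 := by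
    rw [← hX.sum_ite_midpoint_mem_Icc F (haX (.inl ⟨i, rfl⟩)) (haX (.inr ⟨i, rfl⟩)) (hab i),
      ← hY.sum_ite_midpoint_mem_Icc G (hcY (.inl ⟨i, rfl⟩)) (hcY (.inr ⟨i, rfl⟩)) (hcd i),
      Finset.sum_mul_sum]
    simp only [ite_zero_mul_ite_zero, rect, mem_prod, u, v, cell]
  -- each grid cell lies in exactly one rectangle
  have hcell {p q : ℕ} (hp : p < M) (hq : q < N) :
      ∑ i, (if (u p, v q) ∈ rect i then cell p q else 0) = cell p q := by
    have hcentre : (u p, v q) ∈ Icc A B ×ˢ Icc C D := by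
      rw [← hX0, ← hXM, ← hY0, ← hYN]
      exact ⟨(hX.midpoint_mem_Icc_iff hp (Nat.zero_le _) le_rfl).2 ⟨Nat.zero_le _, hp⟩,
        (hY.midpoint_mem_Icc_iff hq (Nat.zero_le _) le_rfl).2 ⟨Nat.zero_le _, hq⟩⟩
    obtain ⟨i, hi⟩ := mem_iUnion.1 (hcov ▸ hcentre)
    have hint {j : ι} (hj : (u p, v q) ∈ rect j) :
        (u p, v q) ∈ Ioo (a j) (b j) ×ˢ Ioo (c j) (d j) :=
      ⟨hX.midpoint_mem_Ioo_of_mem_Icc hp (haX (.inl ⟨j, rfl⟩)) (haX (.inr ⟨j, rfl⟩)) hj.1,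
        hY.midpoint_mem_Ioo_of_mem_Icc hq (hcY (.inl ⟨j, rfl⟩)) (hcY (.inr ⟨j, rfl⟩)) hj.2⟩
    rw [Finset.sum_eq_single_of_mem i (Finset.mem_univ i), if_pos hi]
    intro j _ hji
    rw [if_neg fun hj => disjoint_left.1 (hdisj hji) (hint hj) (hint hi)]
  calc ∑ i, (F (b i) - F (a i)) * (G (d i) - G (c i))
      = ∑ p ∈ Finset.range M, ∑ q ∈ Finset.range N, ∑ i,
          if (u p, v q) ∈ rect i then cell p q else 0 := by
        simp only [hweight]
        rw [Finset.sum_comm]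
        exact Finset.sum_congr rfl fun p _ => Finset.sum_comm
    _ = ∑ p ∈ Finset.range M, ∑ q ∈ Finset.range N, cell p q :=
        Finset.sum_congr rfl fun p hp => Finset.sum_congr rfl fun q hq =>
          hcell (Finset.mem_range.1 hp) (Finset.mem_range.1 hq)
    _ = (F B - F A) * (G D - G C) := by
        rw [← Finset.sum_mul_sum, Finset.sum_range_sub (fun p => F (X p)),
          Finset.sum_range_sub (fun q => G (Y q)), hX0, hXM, hY0, hYN]

theorem exists_semilinearMap_apply_eq_one {K V S : Type*} [Field K] [AddCommGroup V]
    [Module K V] [Semiring S] (σ : K →+* S) {x : V} (hx : x ≠ 0) :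
    ∃ f : V →ₛₗ[σ] S, f x = 1 := by
  obtain ⟨φ, hφ⟩ := Module.Projective.exists_dual_eq_one K hx
  exact ⟨σ.toSemilinearMap.comp φ, by simp [hφ]⟩

open Polynomial in
theorem minpoly_sqrt_two : minpoly ℚ (√2 : ℝ) = X ^ 2 - C 2 := by
  have hmonic : (X ^ 2 - C 2 : ℚ[X]).Monic := monic_X_pow_sub_C _ two_ne_zero
  refine (minpoly.eq_of_irreducible_of_monic ?_ (by simp) hmonic).symm
  refine X_pow_sub_C_irreducible_of_prime Nat.prime_two fun q hq => ?_
  have hq' : (q : ℝ) ^ 2 = 2 := by exact_mod_cast hq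
  refine irrational_sqrt_two.ne_rat |q| ?_
  rw [← hq', Real.sqrt_sq_eq_abs, Rat.cast_abs]

theorem isIntegral_sqrt_two : IsIntegral ℚ (√2 : ℝ) :=
  ⟨_, Polynomial.monic_X_pow_sub_C (2 : ℚ) two_ne_zero, by simp⟩

open IntermediateField

noncomputable def sqrtTwoConj : ℚ⟮(√2 : ℝ)⟯ →ₐ[ℚ] ℝ :=
  (adjoin.powerBasis isIntegral_sqrt_two).lift (-√2) <| by
    rw [adjoin.powerBasis_gen, minpoly_gen, minpoly_sqrt_two]
    simp

theorem sqrtTwoConj_gen : sqrtTwoConj (AdjoinSimple.gen ℚ (√2 : ℝ)) = -√2 :=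
  PowerBasis.lift_gen _ _ _

theorem exists_additive_one_add_sqrt_two_mul :
    ∃ f : ℝ →+ ℝ, f 1 = 1 ∧ ∀ t, f ((1 + √2) * t) = (1 - √2) * f t := by
  obtain ⟨f, hf⟩ := exists_semilinearMap_apply_eq_one sqrtTwoConj.toRingHom (one_ne_zero (α := ℝ))
  refine ⟨f.toAddMonoidHom, hf, fun t => ?_⟩
  have : (1 + √2) * t = (1 + AdjoinSimple.gen ℚ (√2 : ℝ)) • t := by
    rw [Algebra.smul_def]; simp
  rw [LinearMap.toAddMonoidHom_coe, this, map_smulₛₗ]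
  simp [sqrtTwoConj_gen, sub_eq_add_neg]

theorem mul_apply_nonpos_of_apply_mul {f : ℝ → ℝ} {r ρ : ℝ} (hf : ∀ t, f (r * t) = ρ * f t)
    (hρ : ρ ≤ 0) {w h : ℝ} (hwh : w = r * h ∨ h = r * w) : f w * f h ≤ 0 := by
  rcases hwh with rfl | rfl
  · rw [hf, mul_assoc]
    exact mul_nonpos_of_nonpos_of_nonneg hρ (mul_self_nonneg _)
  · rw [hf, mul_left_comm]
    exact mul_nonpos_of_nonpos_of_nonneg hρ (mul_self_nonneg _)

theorem eq_mul_or_eq_mul_of_div_eq {w h r : ℝ} (hh : h ≠ 0) (hr : r ≠ 0)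
    (hwh : w / h = r ∨ w / h = 1 / r) : w = r * h ∨ h = r * w := by
  rcases hwh with hwh | hwh
  · exact .inl ((div_eq_iff hh).1 hwh)
  · right
    rw [div_eq_div_iff hh hr] at hwh
    linarith

/-- A square cannot be partitioned into finitely many axis-parallel rectangles
each having side ratio `1+√2` or `1/(1+√2)`. -/
theorem no_square_partition_ratio_one_add_sqrt_two :
    ¬ ∃ (n : ℕ) (x y w h : Fin n → ℝ),
      (∀ i, 0 < w i) ∧ (∀ i, 0 < h i) ∧
      (∀ i, w i / h i = (1 + Real.sqrt 2) ∨ w i / h i = 1 / (1 + Real.sqrt 2)) ∧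
      (⋃ i, Icc (x i) (x i + w i) ×ˢ Icc (y i) (y i + h i))
        = Icc (0:ℝ) 1 ×ˢ Icc (0:ℝ) 1 ∧
      (∀ i j, i ≠ j →
        Disjoint (Ioo (x i) (x i + w i) ×ˢ Ioo (y i) (y i + h i))
                 (Ioo (x j) (x j + w j) ×ˢ Ioo (y j) (y j + h j))) := by
  rintro ⟨n, x, y, w, h, hw, hh, hr, hcov, hdisj⟩
  obtain ⟨f, hf1, hf⟩ := exists_additive_one_add_sqrt_two_mul
  have hsum : ∑ i, f (w i) * f (h i) = 1 := by
    have := sum_mul_sub_eq_of_iUnion_eq f f (fun i => le_add_of_nonneg_right (hw i).le)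
      (fun i => le_add_of_nonneg_right (hh i).le) zero_le_one zero_le_one hcov hdisj
    simpa [hf1] using this
  have hterm (i : Fin n) : f (w i) * f (h i) ≤ 0 :=
    mul_apply_nonpos_of_apply_mul hf (by linarith [Real.one_lt_sqrt_two])
      (eq_mul_or_eq_mul_of_div_eq (hh i).ne' (by positivity) (hr i))
  linarith [Finset.sum_nonpos fun i (_ : i ∈ Finset.univ) => hterm i]
end

section
/- If a rectangle is partitioned into finitely many axis-parallel rectangles each of which has at least one side of integer length, then the large rectangle has at least one side of integer length. -/
/-!
Integrate `f (x, y) = e^{2πix} e^{2πiy}` over the large rectangle. Over a rectangle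
`[s, s + w] × [t, t + h]` the integral of `f` factors as `(∫ₛ^{s+w} e^{2πix} dx) (∫ₜ^{t+h} e^{2πiy} dy)`,
and `∫ₛ^{s+w} e^{2πix} dx = (e^{2πi(s+w)} - e^{2πis}) / 2πi` vanishes exactly when `w` is an integer.
Hence every tile contributes `0`, and since distinct tiles overlap only in a null set, the integral
over the large rectangle is `0` as well, so one of its sides is an integer.
-/

open Set MeasureTheory Complex Real

noncomputable def expTwoPiI (t : ℝ) : ℂ := exp (2 * π * I * t)

@[fun_prop]
lemma continuous_expTwoPiI : Continuous expTwoPiI := by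
  unfold expTwoPiI
  fun_prop

lemma integral_Icc_expTwoPiI_eq_zero_iff (s : ℝ) {w : ℝ} (hw : 0 ≤ w) :
    ∫ t in Icc s (s + w), expTwoPiI t = 0 ↔ ∃ m : ℤ, w = m := by
  have h2πi : (2 * π * I : ℂ) ≠ 0 := by simp [Real.pi_ne_zero, I_ne_zero]
  rw [integral_Icc_eq_integral_Ioc, ← intervalIntegral.integral_of_le (by linarith)]
  simp only [expTwoPiI]
  rw [integral_exp_mul_complex h2πi, div_eq_zero_iff, or_iff_left h2πi, sub_eq_zero,
    exp_eq_exp_iff_exists_int]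
  refine exists_congr fun m => ⟨fun hm => ?_, fun hm => by rw [hm]; push_cast; ring⟩
  have : (2 * π * I) * (w : ℂ) = (2 * π * I) * m := by
    push_cast at hm
    linear_combination hm
  exact_mod_cast mul_left_cancel₀ h2πi this

lemma setIntegral_Icc_prod_Icc_expTwoPiI_eq_zero_iff (s t : ℝ) {w h : ℝ} (hw : 0 ≤ w)
    (hh : 0 ≤ h) :
    ∫ p in Icc s (s + w) ×ˢ Icc t (t + h), expTwoPiI p.1 * expTwoPiI p.2 = 0 ↔
      (∃ m : ℤ, w = m) ∨ (∃ m : ℤ, h = m) := by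
  rw [Measure.volume_eq_prod, setIntegral_prod_mul, mul_eq_zero,
    integral_Icc_expTwoPiI_eq_zero_iff s hw, integral_Icc_expTwoPiI_eq_zero_iff t hh]

lemma aedisjoint_Icc_prod_Icc_of_disjoint_Ioo_prod_Ioo {α β : Type*} [MeasurableSpace α]
    [MeasurableSpace β] [PartialOrder α] [PartialOrder β] {μ : Measure α} {ν : Measure β}
    [NullSingletonClass μ] [NullSingletonClass ν] {a b a' b' : α} {c d c' d' : β}
    (h : Disjoint (Ioo a b ×ˢ Ioo c d) (Ioo a' b' ×ˢ Ioo c' d')) :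
    AEDisjoint (μ.prod ν) (Icc a b ×ˢ Icc c d) (Icc a' b' ×ˢ Icc c' d') :=
  h.aedisjoint.congr (Measure.set_prod_ae_eq Ioo_ae_eq_Icc Ioo_ae_eq_Icc).symm
    (Measure.set_prod_ae_eq Ioo_ae_eq_Icc Ioo_ae_eq_Icc).symm

/-- If a rectangle `[0,a] × [0,b]` is partitioned into finitely many
axis-parallel rectangles each of which has at least one side of integer length,
then `a` or `b` is an integer. -/
theorem integer_side_of_partition (a b : ℝ) (ha : 0 < a) (hb : 0 < b)
    (n : ℕ) (x y w h : Fin n → ℝ) (hw : ∀ i, 0 < w i) (hh : ∀ i, 0 < h i)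
    (hint : ∀ i, (∃ m : ℤ, w i = m) ∨ (∃ m : ℤ, h i = m))
    (hcover : (⋃ i, Icc (x i) (x i + w i) ×ˢ Icc (y i) (y i + h i))
      = Icc (0:ℝ) a ×ˢ Icc (0:ℝ) b)
    (hdisj : ∀ i j, i ≠ j →
      Disjoint (Ioo (x i) (x i + w i) ×ˢ Ioo (y i) (y i + h i))
               (Ioo (x j) (x j + w j) ×ˢ Ioo (y j) (y j + h j))) :
    (∃ m : ℤ, a = m) ∨ (∃ m : ℤ, b = m) := by
  have hf : Continuous fun p : ℝ × ℝ => expTwoPiI p.1 * expTwoPiI p.2 := by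
    fun_prop
  have hsum := integral_iUnion_ae (μ := volume)
    (fun i => (measurableSet_Icc.prod measurableSet_Icc).nullMeasurableSet)
    (fun i j hij => aedisjoint_Icc_prod_Icc_of_disjoint_Ioo_prod_Ioo (hdisj i j hij))
    (hcover ▸ hf.continuousOn.integrableOn_compact (isCompact_Icc.prod isCompact_Icc))
  have htiles : ∀ i, ∫ p in Icc (x i) (x i + w i) ×ˢ Icc (y i) (y i + h i),
      expTwoPiI p.1 * expTwoPiI p.2 = 0 := fun i =>
    (setIntegral_Icc_prod_Icc_expTwoPiI_eq_zero_iff _ _ (hw i).le (hh i).le).2 (hint i)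
  rw [hcover, tsum_fintype, Finset.sum_eq_zero fun i _ => htiles i] at hsum
  simpa using (setIntegral_Icc_prod_Icc_expTwoPiI_eq_zero_iff 0 0 ha.le hb.le).1
    (by simpa using hsum)
end
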